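/- arXiv:1606.02379 — 11 statements merged into one kernel-verified Lean document; each statement's English description precedes it below -/
import Mathlib

section
/- Let K ≥ 1, and for 1 ≤ k ≤ K let A_k ≥ 0, G_k > 0 and σ² > 0. Define P_k^Min by the backward recursion P_k^Min = A_k·(Σ_{i=k+1}^K P_i^Min + σ²/G_k) for k = K, K−1, …, 1. Then (i) the vector (P_1^Min, …, P_K^Min) satisfies every constraint P_k ≥ A_k·(Σ_{i=k+1}^K P_i + σ²/G_k) with equality, and (ii) any vector (P_1, …, P_K) of reals satisfying P_k ≥ A_k·(Σ_{i=k+1}^K P_i + σ²/G_k) for all 1 ≤ k ≤ K satisfies P_k ≥ P_k^Min for every k; in particular Σ_{k=1}^K P_k ≥ Σ_{k=1}^K P_k^Min, so P_Min := Σ_{k=1}^K P_k^Min is the minimum of Σ_{k=1}^K P_k over all vectors satisfying these constraints. -/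
/-- Theorem 1 of the paper: the backward recursion
`P_k^Min = A_k (∑_{i=k+1}^K P_i^Min + σ²/G_k)` yields the componentwise (and hence total-power)
minimum among all power vectors satisfying the QoS constraints
`P_k ≥ A_k (∑_{i=k+1}^K P_i + σ²/G_k)`. -/
theorem stmt_0 (K : ℕ) (hK : 1 ≤ K) (A G : ℕ → ℝ) (σ2 : ℝ)
    (hA : ∀ k ∈ Finset.Icc 1 K, 0 ≤ A k)
    (hG : ∀ k ∈ Finset.Icc 1 K, 0 < G k)
    (hσ : 0 < σ2)
    (PMin : ℕ → ℝ)
    (hPMin : ∀ k ∈ Finset.Icc 1 K,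
      PMin k = A k * ((∑ i ∈ Finset.Ioc k K, PMin i) + σ2 / G k)) :
    -- (i) the vector PMin satisfies every constraint with equality
    (∀ k ∈ Finset.Icc 1 K,
      A k * ((∑ i ∈ Finset.Ioc k K, PMin i) + σ2 / G k) ≤ PMin k ∧
      PMin k = A k * ((∑ i ∈ Finset.Ioc k K, PMin i) + σ2 / G k)) ∧
    -- (ii) any feasible vector dominates PMin componentwise, hence in total power
    (∀ P : ℕ → ℝ,
      (∀ k ∈ Finset.Icc 1 K,
        A k * ((∑ i ∈ Finset.Ioc k K, P i) + σ2 / G k) ≤ P k) →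
      (∀ k ∈ Finset.Icc 1 K, PMin k ≤ P k) ∧
      (∑ k ∈ Finset.Icc 1 K, PMin k) ≤ ∑ k ∈ Finset.Icc 1 K, P k) := by
  constructor
  · intro k hk
    exact ⟨le_of_eq (hPMin k hk).symm, hPMin k hk⟩
  · intro P hP
    have H : ∀ n k, 1 ≤ k → k ≤ K → K - k ≤ n → PMin k ≤ P k := by
      intro n
      induction n with
      | zero =>
        intro k h1 h2 h3
        have hkK : k = K := by omega
        have hmem : k ∈ Finset.Icc 1 K := Finset.mem_Icc.mpr ⟨h1, h2⟩
        have hempty : Finset.Ioc k K = ∅ := by rw [hkK]; simp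
        calc PMin k = A k * ((∑ i ∈ Finset.Ioc k K, PMin i) + σ2 / G k) := hPMin k hmem
          _ = A k * ((∑ i ∈ Finset.Ioc k K, P i) + σ2 / G k) := by rw [hempty]; simp
          _ ≤ P k := hP k hmem
      | succ n ih =>
        intro k h1 h2 h3
        have hmem : k ∈ Finset.Icc 1 K := Finset.mem_Icc.mpr ⟨h1, h2⟩
        have hs : (∑ i ∈ Finset.Ioc k K, PMin i) ≤ ∑ i ∈ Finset.Ioc k K, P i := by
          apply Finset.sum_le_sum
          intro i hi
          rw [Finset.mem_Ioc] at hi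
          exact ih i (by omega) hi.2 (by omega)
        calc PMin k = A k * ((∑ i ∈ Finset.Ioc k K, PMin i) + σ2 / G k) := hPMin k hmem
          _ ≤ A k * ((∑ i ∈ Finset.Ioc k K, P i) + σ2 / G k) := by
              apply mul_le_mul_of_nonneg_left (by linarith) (hA k hmem)
          _ ≤ P k := hP k hmem
    have hcomp : ∀ k ∈ Finset.Icc 1 K, PMin k ≤ P k := by
      intro k hk
      rw [Finset.mem_Icc] at hk
      exact H (K - k) k hk.1 hk.2 le_rfl
    exact ⟨hcomp, Finset.sum_le_sum hcomp⟩
end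

section
/- Let σ² > 0 and 0 < C_k ≤ C_{k+1} be real numbers, and define F_k : ℝ → ℝ by F_k(x) = log₂(C_{k+1}·x + σ²) − log₂(C_k·x + σ²). Then F_k is concave on [0, ∞). -/
/-!
For `x ≥ 0` the summand is `log₂` of the ratio
`(C_{k+1} x + σ²) / (C_k x + σ²) = C_{k+1} / C_k - ((C_{k+1} - C_k) σ² / C_k) (C_k x + σ²)⁻¹`,
which is concave because `(C_k x + σ²)⁻¹` is convex. The logarithm of a positive concave function
is concave, since `log` is concave and increasing.
-/

open Real Set

section Composition

variable {𝕜 E α β : Type*} [Semiring 𝕜] [PartialOrder 𝕜] [AddCommMonoid E]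
  [AddCommMonoid α] [PartialOrder α] [AddCommMonoid β] [PartialOrder β]
  [SMul 𝕜 E] [SMul 𝕜 α] [SMul 𝕜 β] {s : Set E} {t : Set β} {f : E → β} {g : β → α}

/-- Unlike `ConcaveOn.comp`, this does not require the image `f '' s` to be convex. -/
theorem ConcaveOn.comp_of_mapsTo (hg : ConcaveOn 𝕜 t g) (hg' : MonotoneOn g t)
    (hf : ConcaveOn 𝕜 s f) (hst : MapsTo f s t) : ConcaveOn 𝕜 s (g ∘ f) := by
  refine ⟨hf.1, fun x hx y hy a b ha hb hab => ?_⟩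
  calc a • g (f x) + b • g (f y) ≤ g (a • f x + b • f y) := hg.2 (hst hx) (hst hy) ha hb hab
    _ ≤ g (f (a • x + b • y)) :=
      hg' (hg.1 (hst hx) (hst hy) ha hb hab) (hst (hf.1 hx hy ha hb hab)) (hf.2 hx hy ha hb hab)

end Composition

theorem ConcaveOn.log {E : Type*} [AddCommMonoid E] [SMul ℝ E] {s : Set E} {f : E → ℝ}
    (hf : ConcaveOn ℝ s f) (hpos : ∀ x ∈ s, 0 < f x) : ConcaveOn ℝ s fun x => Real.log (f x) :=
  strictConcaveOn_log_Ioi.concaveOn.comp_of_mapsTo strictMonoOn_log.monotoneOn hf hpos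

theorem concaveOn_neg_inv_mul_add {b s : ℝ} (hb : 0 ≤ b) (hs : 0 < s) :
    ConcaveOn ℝ (Ici 0) fun x => -(b * x + s)⁻¹ := by
  have hinv : ConcaveOn ℝ (Ioi 0) fun y : ℝ => -y⁻¹ :=
    (convexOn_zpow (-1)).neg.congr fun y _ => by simp
  have hmono : MonotoneOn (fun y : ℝ => -y⁻¹) (Ioi 0) :=
    fun y hy z hz hyz => neg_le_neg (strictAntiOn_inv_pos.antitoneOn hy hz hyz)
  have haffine : ConcaveOn ℝ (Ici 0) fun x : ℝ => b * x + s :=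
    ((concaveOn_id (convex_Ici 0)).smul hb).add_const s
  exact hinv.comp_of_mapsTo hmono haffine fun x (hx : 0 ≤ x) => show 0 < b * x + s by positivity

theorem concaveOn_div_mul_add {a b s : ℝ} (hb : 0 < b) (hab : b ≤ a) (hs : 0 < s) :
    ConcaveOn ℝ (Ici 0) fun x => (a * x + s) / (b * x + s) := by
  have hc : 0 ≤ (a - b) * s / b := div_nonneg (mul_nonneg (sub_nonneg.2 hab) hs.le) hb.le
  refine (((concaveOn_neg_inv_mul_add hb.le hs).smul hc).add_const (a / b)).congr
    fun x (hx : 0 ≤ x) => ?_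
  have : b * x + s ≠ 0 := by positivity
  simp only [Pi.add_apply, smul_eq_mul]
  field_simp
  ring

/-- Concavity of `F_k(x) = log₂(C_{k+1} x + σ²) − log₂(C_k x + σ²)` on `[0, ∞)`
when `0 < C_k ≤ C_{k+1}` (key ingredient of Theorem 3 of the paper). -/
theorem stmt_4 (σ2 : ℝ) (hσ : 0 < σ2) (Ck Ck1 : ℝ) (hCk : 0 < Ck) (hle : Ck ≤ Ck1)
    (F : ℝ → ℝ)
    (hF : ∀ x : ℝ, F x = Real.logb 2 (Ck1 * x + σ2) - Real.logb 2 (Ck * x + σ2)) :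
    ConcaveOn ℝ (Set.Ici (0 : ℝ)) F := by
  have hpos : ∀ c, 0 < c → ∀ x ∈ Ici (0 : ℝ), 0 < c * x + σ2 :=
    fun c hc x (hx : 0 ≤ x) => by positivity
  have hCk1 : 0 < Ck1 := hCk.trans_le hle
  have hratio : ∀ x ∈ Ici (0 : ℝ), 0 < (Ck1 * x + σ2) / (Ck * x + σ2) :=
    fun x hx => div_pos (hpos Ck1 hCk1 x hx) (hpos Ck hCk x hx)
  have hlog2 : 0 ≤ (Real.log 2)⁻¹ := inv_nonneg.2 (Real.log_nonneg one_le_two)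
  refine (((concaveOn_div_mul_add hCk hle hσ).log hratio).smul hlog2).congr fun x hx => ?_
  dsimp only
  rw [hF, ← logb_div (hpos Ck1 hCk1 x hx).ne' (hpos Ck hCk x hx).ne', logb, smul_eq_mul,
    inv_mul_eq_div]
end

section
/- Let K ≥ 1, σ² > 0, C_k > 0 and A_k ≥ 0 for 1 ≤ k ≤ K, set D_k := A_k/(1 + A_k), and fix θ ∈ ℝ and 1 ≤ K₀ ≤ K−1. Define â_1, …, â_{K₀} by the forward recursion â_k = D_k·(θ − Σ_{i=1}^{k−1} â_i) + D_k·σ²/C_k. Then for any a ∈ ℝ^K satisfying Σ_{k=1}^K a_k = θ and a_k ≥ A_k·(Σ_{i=k+1}^K a_i + σ²/C_k) for all 1 ≤ k ≤ K, one has Σ_{i=1}^{k} a_i ≥ Σ_{i=1}^{k} â_i for every 1 ≤ k ≤ K₀; in particular x_{K₀} := Σ_{i=K₀+1}^K a_i satisfies x_{K₀} ≤ θ − Σ_{k=1}^{K₀} â_k, i.e., the maximum of x_{K₀} over the constraint set is θ − Σ_{k=1}^{K₀} â_k, attained exactly when the first K₀ constraints hold with equality. -/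
/-!
Write `S_k` and `Ŝ_k` for the partial sums of `a` and `â`. Since `∑ a = θ`, the tail
`∑_{i>k} a_i` equals `θ - S_k`, so the `k`-th QoS constraint reads
`(1 + A_k) S_k = S_{k-1} + A_k (θ + σ²/C_k) + s_k` with slack `s_k ≥ 0`, while the recursion for
`â` is the same relation with zero slack. The gap `e_k = S_k - Ŝ_k` therefore satisfies
`(1 + A_k) e_k = e_{k-1} + s_k`, `e_0 = 0`: it is nonnegative, and it vanishes at `K₀` exactly
when `s_1 = ⋯ = s_{K₀} = 0`.
-/

open Finset

section WeightedRecurrence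

variable {e s c : ℕ → ℝ} {n : ℕ}

theorem nonneg_of_one_add_mul_eq_add (h0 : e 0 = 0)
    (hc : ∀ k < n, 0 ≤ c (k + 1)) (hs : ∀ k < n, 0 ≤ s (k + 1))
    (hrec : ∀ k < n, (1 + c (k + 1)) * e (k + 1) = e k + s (k + 1)) :
    0 ≤ e n := by
  induction n with
  | zero => exact h0.ge
  | succ n ih =>
    have he : 0 ≤ e n := ih (fun k hk => hc k (by omega)) (fun k hk => hs k (by omega))
      (fun k hk => hrec k (by omega))
    have hpos : 0 < 1 + c (n + 1) := by linarith [hc n n.lt_succ_self]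
    refine nonneg_of_mul_nonneg_right ?_ hpos
    rw [hrec n n.lt_succ_self]
    linarith [hs n n.lt_succ_self]

theorem eq_zero_iff_of_one_add_mul_eq_add (h0 : e 0 = 0)
    (hc : ∀ k < n, 0 ≤ c (k + 1)) (hs : ∀ k < n, 0 ≤ s (k + 1))
    (hrec : ∀ k < n, (1 + c (k + 1)) * e (k + 1) = e k + s (k + 1)) :
    e n = 0 ↔ ∀ k ∈ Icc 1 n, s k = 0 := by
  induction n with
  | zero => simpa using h0
  | succ n ih =>
    have hc' : ∀ k < n, 0 ≤ c (k + 1) := fun k hk => hc k (by omega)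
    have hs' : ∀ k < n, 0 ≤ s (k + 1) := fun k hk => hs k (by omega)
    have hrec' : ∀ k < n, (1 + c (k + 1)) * e (k + 1) = e k + s (k + 1) :=
      fun k hk => hrec k (by omega)
    have he : 0 ≤ e n := nonneg_of_one_add_mul_eq_add h0 hc' hs' hrec'
    have hpos : 0 < 1 + c (n + 1) := by linarith [hc n n.lt_succ_self]
    have hstep := hrec n n.lt_succ_self
    have hsn := hs n n.lt_succ_self
    rw [← Ico_insert_right (by omega), Ico_add_one_right_eq_Icc,
      forall_mem_insert, ← ih hc' hs' hrec']
    constructor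
    · intro h
      rw [h, mul_zero] at hstep
      constructor <;> linarith
    · rintro ⟨hs0, he0⟩
      rw [hs0, he0, add_zero] at hstep
      exact (mul_eq_zero.mp hstep).resolve_left hpos.ne'

end WeightedRecurrence

theorem sum_Ioc_eq_sub_sum_Icc_one {a : ℕ → ℝ} {K k : ℕ} {θ : ℝ}
    (hsum : ∑ i ∈ Icc 1 K, a i = θ) (hk : k ≤ K) :
    ∑ i ∈ Ioc k K, a i = θ - ∑ i ∈ Icc 1 k, a i := by
  have hIcc : ∀ m, Icc 1 m = Ioc 0 m := Icc_add_one_left_eq_Ioc 0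
  rw [← hsum, hIcc, hIcc, ← sum_Ioc_consecutive a (Nat.zero_le k) hk]
  ring

theorem eq_mul_of_eq_div_one_add_mul {A x y : ℝ} (hA : 0 ≤ A)
    (h : x = A / (1 + A) * (y + x)) : x = A * y := by
  have hpos : 0 < 1 + A := by linarith
  field_simp at h
  linarith

theorem qos_gap_recurrence {K K0 : ℕ} (hK0K : K0 ≤ K) {σ2 θ : ℝ} {C A D a ahat : ℕ → ℝ}
    (hA : ∀ k ∈ Icc 1 K, 0 ≤ A k) (hD : ∀ k, D k = A k / (1 + A k))
    (hahat : ∀ k ∈ Icc 1 K0,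
      ahat k = D k * (θ - ∑ i ∈ Ico 1 k, ahat i) + D k * σ2 / C k)
    (hsum : ∑ k ∈ Icc 1 K, a k = θ) :
    ∀ k < K0,
      (1 + A (k + 1)) * (∑ i ∈ Icc 1 (k + 1), a i - ∑ i ∈ Icc 1 (k + 1), ahat i) =
        (∑ i ∈ Icc 1 k, a i - ∑ i ∈ Icc 1 k, ahat i) +
          (a (k + 1) - A (k + 1) * (∑ i ∈ Ioc (k + 1) K, a i + σ2 / C (k + 1))) := by
  intro k hk
  have hSa := sum_Icc_succ_top (Nat.le_add_left 1 k) a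
  have hSahat := sum_Icc_succ_top (Nat.le_add_left 1 k) ahat
  have hactive : ahat (k + 1) =
      A (k + 1) * (θ - ∑ i ∈ Icc 1 (k + 1), ahat i + σ2 / C (k + 1)) := by
    refine eq_mul_of_eq_div_one_add_mul (hA _ (by simp; omega))
      ((hahat _ (by simp; omega)).trans ?_)
    rw [hD, Ico_add_one_right_eq_Icc, hSahat]
    ring
  rw [sum_Ioc_eq_sub_sum_Icc_one hsum (by omega)]
  linear_combination hSa - hSahat - hactive

theorem stmt_5_general (K K0 : ℕ) (hK0K : K0 ≤ K - 1)
    (σ2 : ℝ) (C A : ℕ → ℝ)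
    (hA : ∀ k ∈ Finset.Icc 1 K, 0 ≤ A k)
    (D : ℕ → ℝ) (hD : ∀ k, D k = A k / (1 + A k))
    (θ : ℝ) (ahat : ℕ → ℝ)
    (hahat : ∀ k ∈ Finset.Icc 1 K0,
      ahat k = D k * (θ - ∑ i ∈ Finset.Ico 1 k, ahat i) + D k * σ2 / C k) :
    ∀ a : ℕ → ℝ,
      (∑ k ∈ Finset.Icc 1 K, a k) = θ →
      (∀ k ∈ Finset.Icc 1 K,
        A k * ((∑ i ∈ Finset.Ioc k K, a i) + σ2 / C k) ≤ a k) →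
      (∀ k ∈ Finset.Icc 1 K0,
        (∑ i ∈ Finset.Icc 1 k, ahat i) ≤ ∑ i ∈ Finset.Icc 1 k, a i) ∧
      ((∑ i ∈ Finset.Ioc K0 K, a i) ≤ θ - ∑ k ∈ Finset.Icc 1 K0, ahat k) ∧
      ((∑ i ∈ Finset.Ioc K0 K, a i) = θ - (∑ k ∈ Finset.Icc 1 K0, ahat k) ↔
        ∀ k ∈ Finset.Icc 1 K0,
          a k = A k * ((∑ i ∈ Finset.Ioc k K, a i) + σ2 / C k)) := by
  intro a hsum hcon
  have hK0K' : K0 ≤ K := hK0K.trans (Nat.sub_le K 1)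
  let gap n := ∑ i ∈ Icc 1 n, a i - ∑ i ∈ Icc 1 n, ahat i
  let slack k := a k - A k * (∑ i ∈ Ioc k K, a i + σ2 / C k)
  have hrec : ∀ k < K0, (1 + A (k + 1)) * gap (k + 1) = gap k + slack (k + 1) :=
    qos_gap_recurrence hK0K' hA hD hahat hsum
  have hc : ∀ k < K0, 0 ≤ A (k + 1) := fun k hk => hA _ (by simp; omega)
  have hs : ∀ k < K0, 0 ≤ slack (k + 1) :=
    fun k hk => sub_nonneg.mpr (hcon _ (by simp; omega))
  have h0 : gap 0 = 0 := by simp [gap]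
  have hgap : ∀ n ≤ K0, ∑ i ∈ Icc 1 n, ahat i ≤ ∑ i ∈ Icc 1 n, a i := fun n hn =>
    sub_nonneg.mp <| nonneg_of_one_add_mul_eq_add h0 (fun k hk => hc k (by omega))
      (fun k hk => hs k (by omega)) (fun k hk => hrec k (by omega))
  have hiff := eq_zero_iff_of_one_add_mul_eq_add h0 hc hs hrec
  rw [sum_Ioc_eq_sub_sum_Icc_one hsum hK0K']
  refine ⟨fun k hk => hgap k (mem_Icc.mp hk).2, by linarith [hgap K0 le_rfl], ?_⟩
  rw [sub_right_inj, ← sub_eq_zero]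
  exact hiff.trans (forall₂_congr fun k _ => sub_eq_zero)

/-- Proposition 1 of the paper: with `â_k` defined by the forward recursion
`â_k = D_k (θ − ∑_{i<k} â_i) + D_k σ²/C_k`, `D_k = A_k/(1+A_k)`, every feasible power
allocation `a` (total `θ`, QoS constraints `a_k ≥ A_k (∑_{i>k} a_i + σ²/C_k)`) has partial sums
dominating those of `â`; hence `x_{K₀} = ∑_{i=K₀+1}^K a_i ≤ θ − ∑_{k=1}^{K₀} â_k`, with equality
exactly when the first `K₀` constraints are active. -/
theorem stmt_5 (K K0 : ℕ) (hK : 1 ≤ K) (hK0 : 1 ≤ K0) (hK0K : K0 ≤ K - 1)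
    (σ2 : ℝ) (hσ : 0 < σ2) (C A : ℕ → ℝ)
    (hC : ∀ k ∈ Finset.Icc 1 K, 0 < C k)
    (hA : ∀ k ∈ Finset.Icc 1 K, 0 ≤ A k)
    (D : ℕ → ℝ) (hD : ∀ k, D k = A k / (1 + A k))
    (θ : ℝ) (ahat : ℕ → ℝ)
    (hahat : ∀ k ∈ Finset.Icc 1 K0,
      ahat k = D k * (θ - ∑ i ∈ Finset.Ico 1 k, ahat i) + D k * σ2 / C k) :
    ∀ a : ℕ → ℝ,
      (∑ k ∈ Finset.Icc 1 K, a k) = θ →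
      (∀ k ∈ Finset.Icc 1 K,
        A k * ((∑ i ∈ Finset.Ioc k K, a i) + σ2 / C k) ≤ a k) →
      (∀ k ∈ Finset.Icc 1 K0,
        (∑ i ∈ Finset.Icc 1 k, ahat i) ≤ ∑ i ∈ Finset.Icc 1 k, a i) ∧
      ((∑ i ∈ Finset.Ioc K0 K, a i) ≤ θ - ∑ k ∈ Finset.Icc 1 K0, ahat k) ∧
      ((∑ i ∈ Finset.Ioc K0 K, a i) = θ - (∑ k ∈ Finset.Icc 1 K0, ahat k) ↔
        ∀ k ∈ Finset.Icc 1 K0,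
          a k = A k * ((∑ i ∈ Finset.Ioc k K, a i) + σ2 / C k)) :=
  stmt_5_general K K0 hK0K σ2 C A hA D hD θ ahat hahat
end

section
/- Let K ≥ 2, σ² > 0, 0 < C_1 ≤ C_2 ≤ … ≤ C_K, A_k ≥ 0 and D_k := A_k/(1 + A_k) for 1 ≤ k ≤ K, and fix θ ∈ ℝ. Define a*_k(θ) by a*_k(θ) = D_k·(θ − Σ_{i=1}^{k−1} a*_i(θ)) + D_k·σ²/C_k for 1 ≤ k ≤ K−1 and a*_K(θ) = θ − Σ_{i=1}^{K−1} a*_i(θ), and set x*_k(θ) := Σ_{i=k+1}^K a*_i(θ). Then for every a ∈ ℝ^K satisfying Σ_{k=1}^K a_k = θ and a_k ≥ A_k·(Σ_{i=k+1}^K a_i + σ²/C_k) for all 1 ≤ k ≤ K, one has Σ_{k=1}^{K−1} F_k(Σ_{i=k+1}^K a_i) ≤ Σ_{k=1}^{K−1} F_k(x*_k(θ)), where F_k(x) = log₂(C_{k+1}·x + σ²) − log₂(C_k·x + σ²). -/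
private lemma F_mono (σ2 c c' x y : ℝ) (hσ : 0 < σ2) (hc : 0 < c) (hcc : c ≤ c')
    (hx : 0 ≤ x) (hxy : x ≤ y) :
    Real.logb 2 (c' * x + σ2) - Real.logb 2 (c * x + σ2) ≤
      Real.logb 2 (c' * y + σ2) - Real.logb 2 (c * y + σ2) := by
  have hc' : 0 < c' := lt_of_lt_of_le hc hcc
  have hy : 0 ≤ y := le_trans hx hxy
  have h1 : 0 < c * x + σ2 := by positivity
  have h2 : 0 < c' * x + σ2 := by positivity
  have h3 : 0 < c * y + σ2 := by positivity
  have h4 : 0 < c' * y + σ2 := by positivity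
  rw [← Real.logb_div h2.ne' h1.ne', ← Real.logb_div h4.ne' h3.ne']
  apply Real.logb_le_logb_of_le one_lt_two (by positivity)
  · rw [div_le_div_iff₀ h1 h3]
    nlinarith [mul_nonneg (mul_nonneg hσ.le (sub_nonneg.2 hcc)) (sub_nonneg.2 hxy)]

/-- Theorem 2 of the paper: the closed-form allocation `a*` in (24), given by
`a*_k = D_k (θ − ∑_{i<k} a*_i) + D_k σ²/C_k` for `k ≤ K−1` and
`a*_K = θ − ∑_{i<K} a*_i`, maximizes `∑_{k=1}^{K−1} F_k(x_k)` over all feasible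
power allocations with total `θ`, where
`F_k(x) = log₂(C_{k+1} x + σ²) − log₂(C_k x + σ²)` and `x_k = ∑_{i=k+1}^K a_i`. -/
theorem stmt_6 (K : ℕ) (hK : 2 ≤ K) (σ2 : ℝ) (hσ : 0 < σ2)
    (C A : ℕ → ℝ)
    (hCpos : ∀ k ∈ Finset.Icc 1 K, 0 < C k)
    (hCmono : ∀ k ∈ Finset.Icc 1 (K - 1), C k ≤ C (k + 1))
    (hA : ∀ k ∈ Finset.Icc 1 K, 0 ≤ A k)
    (D : ℕ → ℝ) (hD : ∀ k, D k = A k / (1 + A k))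
    (θ : ℝ) (astar : ℕ → ℝ)
    (hastar : ∀ k ∈ Finset.Icc 1 (K - 1),
      astar k = D k * (θ - ∑ i ∈ Finset.Ico 1 k, astar i) + D k * σ2 / C k)
    (hastarK : astar K = θ - ∑ i ∈ Finset.Ico 1 K, astar i) :
    ∀ a : ℕ → ℝ,
      (∑ k ∈ Finset.Icc 1 K, a k) = θ →
      (∀ k ∈ Finset.Icc 1 K,
        A k * ((∑ i ∈ Finset.Ioc k K, a i) + σ2 / C k) ≤ a k) →
      ∑ k ∈ Finset.Icc 1 (K - 1),
          (Real.logb 2 (C (k + 1) * (∑ i ∈ Finset.Ioc k K, a i) + σ2) -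
            Real.logb 2 (C k * (∑ i ∈ Finset.Ioc k K, a i) + σ2)) ≤
        ∑ k ∈ Finset.Icc 1 (K - 1),
          (Real.logb 2 (C (k + 1) * (∑ i ∈ Finset.Ioc k K, astar i) + σ2) -
            Real.logb 2 (C k * (∑ i ∈ Finset.Ioc k K, astar i) + σ2)) := by
  intro a htot hqos
  set x : ℕ → ℝ := fun k => ∑ i ∈ Finset.Ioc k K, a i with hxdef
  set xs : ℕ → ℝ := fun k => ∑ i ∈ Finset.Ioc k K, astar i with hxsdef
  -- step recurrence for summations over Ioc
  have hIoc : ∀ (f : ℕ → ℝ), ∀ k < K,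
      ∑ i ∈ Finset.Ioc k K, f i = f (k+1) + ∑ i ∈ Finset.Ioc (k+1) K, f i := by
    intro f k hk
    rw [show Finset.Ioc k K = insert (k+1) (Finset.Ioc (k+1) K) by
      ext i; simp; omega]
    rw [Finset.sum_insert (by simp)]
  -- splitting Icc 1 K
  have hsplit : ∀ (f : ℕ → ℝ), ∀ k ≤ K,
      ∑ i ∈ Finset.Icc 1 K, f i =
        (∑ i ∈ Finset.Ico 1 (k+1), f i) + ∑ i ∈ Finset.Ioc k K, f i := by
    intro f k hk
    rw [show Finset.Icc 1 K = Finset.Ico 1 (k+1) ∪ Finset.Ioc k K by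
      ext i; simp; omega]
    rw [Finset.sum_union (by rw [Finset.disjoint_left]; intro i; simp; omega)]
  -- total of astar is θ
  have hstot : (∑ k ∈ Finset.Icc 1 K, astar k) = θ := by
    have h1 : Finset.Icc 1 K = insert K (Finset.Ico 1 K) := by ext i; simp; omega
    rw [h1, Finset.sum_insert (by simp), hastarK]; ring
  -- x 0 = θ, xs 0 = θ
  have hIoc0 : Finset.Ioc 0 K = Finset.Icc 1 K := by ext i; simp; omega
  have hx0 : x 0 = θ := by simp only [hxdef]; rw [hIoc0]; exact htot
  have hxs0 : xs 0 = θ := by simp only [hxsdef]; rw [hIoc0]; exact hstot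
  -- nonnegativity of x k (downward induction via j ↦ K - j)
  have hxnn' : ∀ j, j ≤ K → 0 ≤ x (K - j) := by
    intro j
    induction j with
    | zero => intro _; simp [hxdef]
    | succ j ih =>
      intro hj
      have hjK : j ≤ K := by omega
      have ihx : 0 ≤ x (K - j) := ih hjK
      set m := K - (j+1) with hm
      have hmK : m < K := by omega
      have hKj : K - j = m + 1 := by omega
      have hrec : x m = a (m+1) + x (m+1) := hIoc a m hmK
      have hmem : m + 1 ∈ Finset.Icc 1 K := by simp; omega
      have hq := hqos (m+1) hmem
      have hCm : 0 < C (m+1) := hCpos (m+1) hmem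
      have hAm : 0 ≤ A (m+1) := hA (m+1) hmem
      have hxm1 : 0 ≤ x (m+1) := by rw [← hKj]; exact ihx
      have hσC : 0 ≤ σ2 / C (m+1) := by positivity
      have : 0 ≤ a (m+1) := le_trans (by positivity) hq
      rw [hrec]; linarith
  have hxnn : ∀ k, k ≤ K → 0 ≤ x k := by
    intro k hk
    have := hxnn' (K - k) (by omega)
    rwa [show K - (K - k) = k by omega] at this
  -- main: x k ≤ xs k for k ≤ K - 1
  have hmain : ∀ k, k ≤ K - 1 → x k ≤ xs k := by
    intro k
    induction k with
    | zero => intro _; rw [hx0, hxs0]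
    | succ k ih =>
      intro hk1
      have hkK : k ≤ K - 1 := by omega
      have ihk : x k ≤ xs k := ih hkK
      have hkK' : k < K := by omega
      have hmem : k + 1 ∈ Finset.Icc 1 K := by simp; omega
      have hmem1 : k + 1 ∈ Finset.Icc 1 (K - 1) := by simp; omega
      have hCm : 0 < C (k+1) := hCpos (k+1) hmem
      have hAm : 0 ≤ A (k+1) := hA (k+1) hmem
      have h1A : (0:ℝ) < 1 + A (k+1) := by linarith
      -- recurrences
      have hrecx : x k = a (k+1) + x (k+1) := hIoc a k hkK'
      have hrecxs : xs k = astar (k+1) + xs (k+1) := hIoc astar k hkK'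
      -- identify θ - prefix sum with xs k
      have hpre : θ - (∑ i ∈ Finset.Ico 1 (k+1), astar i) = xs k := by
        have := hsplit astar k (by omega)
        rw [hstot] at this
        simp only [hxsdef]; linarith
      have hastm := hastar (k+1) hmem1
      rw [hpre] at hastm
      -- exact recurrence for xs
      have hxs_eq : (1 + A (k+1)) * xs (k+1) = xs k - A (k+1) * σ2 / C (k+1) := by
        have hxs1 : xs (k+1) = xs k - astar (k+1) := by linarith
        rw [hxs1, hastm, hD]
        field_simp
        ring
      -- inequality for x
      have hq := hqos (k+1) hmem
      have hx_le : (1 + A (k+1)) * x (k+1) ≤ x k - A (k+1) * σ2 / C (k+1) := by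
        have : A (k+1) * (x (k+1) + σ2 / C (k+1)) ≤ a (k+1) := hq
        have hdiv : A (k+1) * (σ2 / C (k+1)) = A (k+1) * σ2 / C (k+1) := by ring
        nlinarith [this, hrecx]
      have : (1 + A (k+1)) * x (k+1) ≤ (1 + A (k+1)) * xs (k+1) := by
        rw [hxs_eq]; linarith
      exact le_of_mul_le_mul_left (by linarith) h1A
  -- conclude
  apply Finset.sum_le_sum
  intro k hk
  simp only [Finset.mem_Icc] at hk
  have hmemK : k ∈ Finset.Icc 1 K := by simp; omega
  exact F_mono σ2 (C k) (C (k+1)) (x k) (xs k) hσ (hCpos k hmemK)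
    (hCmono k (by simp; omega)) (hxnn k (by omega)) (hmain k hk.2)
end

section
/- Let K ≥ 2, σ² > 0, C_k > 0, A_k > 0 and D_k := A_k/(1 + A_k) ∈ (0,1) for 1 ≤ k ≤ K, fix θ ∈ ℝ, and let S(θ) := { a ∈ ℝ^K : Σ_{k=1}^K a_k = θ and a_k ≥ A_k·(Σ_{i=k+1}^K a_i + σ²/C_k) for all k }. For 1 ≤ K₀ ≤ K−1 let Φ_{K₀} denote the set of maximizers over S(θ) of the map a ↦ Σ_{i=K₀+1}^K a_i. Then Φ_1 ⊇ Φ_2 ⊇ … ⊇ Φ_{K−1}, i.e., for every 1 ≤ K₀ ≤ K−2, any maximizer of a ↦ Σ_{i=K₀+2}^K a_i over S(θ) also maximizes a ↦ Σ_{i=K₀+1}^K a_i over S(θ). -/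
/-- The set-inclusion chain (25a) of the paper: the maximizer sets `Φ_{K₀}` of
`x_{K₀} = ∑_{i=K₀+1}^K a_i` over the feasible set
`S(θ) = {a : ∑ a_k = θ, a_k ≥ A_k (∑_{i>k} a_i + σ²/C_k)}` are nested, i.e. any maximizer of
`∑_{i=K₀+2}^K a_i` over `S(θ)` also maximizes `∑_{i=K₀+1}^K a_i` over `S(θ)`. -/
theorem stmt_7 (K : ℕ) (hK : 2 ≤ K) (σ2 : ℝ) (hσ : 0 < σ2)
    (C A : ℕ → ℝ)
    (hC : ∀ k ∈ Finset.Icc 1 K, 0 < C k)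
    (hA : ∀ k ∈ Finset.Icc 1 K, 0 < A k)
    (θ : ℝ) (S : Set (ℕ → ℝ))
    (hS : S = {a : ℕ → ℝ | (∑ k ∈ Finset.Icc 1 K, a k) = θ ∧
      ∀ k ∈ Finset.Icc 1 K,
        A k * ((∑ i ∈ Finset.Ioc k K, a i) + σ2 / C k) ≤ a k})
    (K0 : ℕ) (hK0 : 1 ≤ K0) (hK0K : K0 ≤ K - 2)
    (a : ℕ → ℝ) (haS : a ∈ S)
    (hmax : ∀ b ∈ S,
      (∑ i ∈ Finset.Ioc (K0 + 1) K, b i) ≤ ∑ i ∈ Finset.Ioc (K0 + 1) K, a i) :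
    ∀ b ∈ S, (∑ i ∈ Finset.Ioc K0 K, b i) ≤ ∑ i ∈ Finset.Ioc K0 K, a i := by
  intro b hb
  subst hS
  obtain ⟨hbsum, hbcon⟩ := hb
  obtain ⟨hasum, hacon⟩ := haS
  have hK2 : K0 + 2 ≤ K := by omega
  set A1 := A (K0 + 1) with hA1def
  have hA1pos : 0 < A1 := hA (K0 + 1) (by simp [Finset.mem_Icc]; omega)
  have h1A1 : 0 < 1 + A1 := by linarith
  set s := σ2 / C (K0 + 1) with hsdef
  set xb := ∑ i ∈ Finset.Ioc (K0 + 1) K, b i with hxb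
  set xa := ∑ i ∈ Finset.Ioc (K0 + 1) K, a i with hxa
  have hslack : A1 * (xb + s) ≤ b (K0 + 1) :=
    hbcon (K0 + 1) (by simp [Finset.mem_Icc]; omega)
  set μ := (b (K0 + 1) - A1 * (xb + s)) / (1 + A1) with hμ
  have hμ0 : 0 ≤ μ := div_nonneg (by linarith) (le_of_lt h1A1)
  have hμeq : μ * (1 + A1) = b (K0 + 1) - A1 * (xb + s) := by
    rw [hμ]; field_simp
  set c : ℕ → ℝ := fun k =>
    b k + ((if k = K0 + 1 then -μ else 0) + (if k = K0 + 2 then μ else 0)) with hc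
  have hsum_c : ∀ t : Finset ℕ, ∑ i ∈ t, c i
      = (∑ i ∈ t, b i)
        + ((if K0 + 1 ∈ t then -μ else 0) + (if K0 + 2 ∈ t then μ else 0)) := by
    intro t
    simp only [hc, Finset.sum_add_distrib, Finset.sum_ite_eq']
  have hcS : c ∈ {a : ℕ → ℝ | (∑ k ∈ Finset.Icc 1 K, a k) = θ ∧
      ∀ k ∈ Finset.Icc 1 K,
        A k * ((∑ i ∈ Finset.Ioc k K, a i) + σ2 / C k) ≤ a k} := by
    constructor
    · rw [hsum_c]
      have h1 : K0 + 1 ∈ Finset.Icc 1 K := by simp [Finset.mem_Icc]; omega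
      have h2 : K0 + 2 ∈ Finset.Icc 1 K := by simp [Finset.mem_Icc]; omega
      rw [if_pos h1, if_pos h2, hbsum]; ring
    · intro k hk
      have hk' : 1 ≤ k ∧ k ≤ K := Finset.mem_Icc.mp hk
      have hbk := hbcon k hk
      rw [hsum_c]
      rcases lt_trichotomy k (K0 + 1) with hlt | heq | hgt
      · have h1 : K0 + 1 ∈ Finset.Ioc k K := by simp [Finset.mem_Ioc]; omega
        have h2 : K0 + 2 ∈ Finset.Ioc k K := by simp [Finset.mem_Ioc]; omega
        have hne1 : k ≠ K0 + 1 := by omega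
        have hne2 : k ≠ K0 + 2 := by omega
        have hck : c k = b k := by simp [hc, hne1, hne2]
        rw [if_pos h1, if_pos h2, hck]
        have : (-μ + μ : ℝ) = 0 := by ring
        rw [this, add_zero]
        exact hbk
      · subst heq
        have h1 : K0 + 1 ∉ Finset.Ioc (K0 + 1) K := by simp [Finset.mem_Ioc]
        have h2 : K0 + 2 ∈ Finset.Ioc (K0 + 1) K := by simp [Finset.mem_Ioc]; omega
        have hck : c (K0 + 1) = b (K0 + 1) - μ := by simp [hc]; ring
        rw [if_neg h1, if_pos h2, hck]
        rw [← hxb, ← hA1def, ← hsdef]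
        nlinarith [hμeq]
      · have h1 : K0 + 1 ∉ Finset.Ioc k K := by simp [Finset.mem_Ioc]; omega
        have h2 : K0 + 2 ∉ Finset.Ioc k K := by simp [Finset.mem_Ioc]; omega
        rw [if_neg h1, if_neg h2]
        have hne1 : k ≠ K0 + 1 := by omega
        rcases eq_or_lt_of_le (show K0 + 2 ≤ k by omega) with heq2 | hgt2
        · have hck : c k = b k + μ := by simp [hc, hne1, ← heq2]
          rw [hck]
          have : A k * ((∑ i ∈ Finset.Ioc k K, b i) + (0 + 0) + σ2 / C k)
              = A k * ((∑ i ∈ Finset.Ioc k K, b i) + σ2 / C k) := by ring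
          rw [this]; linarith
        · have hne2 : k ≠ K0 + 2 := by omega
          have hck : c k = b k := by simp [hc, hne1, hne2]
          rw [hck]
          have : A k * ((∑ i ∈ Finset.Ioc k K, b i) + (0 + 0) + σ2 / C k)
              = A k * ((∑ i ∈ Finset.Ioc k K, b i) + σ2 / C k) := by ring
          rw [this]; exact hbk
  have hmc := hmax c hcS
  have hsumc2 : ∑ i ∈ Finset.Ioc (K0 + 1) K, c i = xb + μ := by
    rw [hsum_c]
    have h1 : K0 + 1 ∉ Finset.Ioc (K0 + 1) K := by simp [Finset.mem_Ioc]
    have h2 : K0 + 2 ∈ Finset.Ioc (K0 + 1) K := by simp [Finset.mem_Ioc]; omega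
    rw [if_neg h1, if_pos h2, ← hxb]; ring
  rw [hsumc2] at hmc
  have hsplit : ∀ f : ℕ → ℝ, ∑ i ∈ Finset.Ioc K0 K, f i
      = f (K0 + 1) + ∑ i ∈ Finset.Ioc (K0 + 1) K, f i := by
    intro f
    have heq : Finset.Ioc K0 K = insert (K0 + 1) (Finset.Ioc (K0 + 1) K) := by
      ext x; simp [Finset.mem_Ioc, Finset.mem_insert]; omega
    rw [heq, Finset.sum_insert (by simp [Finset.mem_Ioc])]
  rw [hsplit b, hsplit a, ← hxb, ← hxa]
  have haK : A1 * (xa + s) ≤ a (K0 + 1) :=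
    hacon (K0 + 1) (by simp [Finset.mem_Icc]; omega)
  nlinarith [mul_le_mul_of_nonneg_left hmc (le_of_lt h1A1)]
end

section
/- Let K ≥ 2 and let D_1, …, D_K ∈ (0,1). Define c_1, …, c_K by the recursion c_k = D_k·(1 − Σ_{i=1}^{k−1} c_i) for 1 ≤ k ≤ K−1 and c_K = 1 − Σ_{i=1}^{K−1} c_i. Then c_k > 0 for every 1 ≤ k ≤ K. Moreover, if a*_k(θ) is defined by a*_k(θ) = D_k·(θ − Σ_{i=1}^{k−1} a*_i(θ)) + D_k·σ²/C_k for k ≤ K−1 and a*_K(θ) = θ − Σ_{i=1}^{K−1} a*_i(θ) (with σ² > 0, C_k > 0), then for all θ₁, θ₂ ∈ ℝ, a*_k(θ₂) − a*_k(θ₁) = c_k·(θ₂ − θ₁); that is, each a*_k is an affine, strictly increasing function of θ with constant positive slope c_k. -/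
/-- Corollary 1 of the paper: the slopes `c_k` defined by
`c_k = D_k (1 − ∑_{i<k} c_i)` for `k ≤ K−1` and `c_K = 1 − ∑_{i<K} c_i` are all positive,
and the optimal power allocation coefficients `a*_k(θ)` of Theorem 2 are affine in `θ`
with constant slope `c_k`: `a*_k(θ₂) − a*_k(θ₁) = c_k (θ₂ − θ₁)`. -/
theorem stmt_8 (K : ℕ) (hK : 2 ≤ K) (D : ℕ → ℝ)
    (hD : ∀ k ∈ Finset.Icc 1 K, D k ∈ Set.Ioo (0 : ℝ) 1)
    (c : ℕ → ℝ)
    (hc : ∀ k ∈ Finset.Icc 1 (K - 1), c k = D k * (1 - ∑ i ∈ Finset.Ico 1 k, c i))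
    (hcK : c K = 1 - ∑ i ∈ Finset.Ico 1 K, c i)
    (σ2 : ℝ) (hσ : 0 < σ2) (C : ℕ → ℝ) (hC : ∀ k ∈ Finset.Icc 1 K, 0 < C k)
    (astar : ℝ → ℕ → ℝ)
    (hastar : ∀ θ : ℝ, ∀ k ∈ Finset.Icc 1 (K - 1),
      astar θ k = D k * (θ - ∑ i ∈ Finset.Ico 1 k, astar θ i) + D k * σ2 / C k)
    (hastarK : ∀ θ : ℝ, astar θ K = θ - ∑ i ∈ Finset.Ico 1 K, astar θ i) :
    (∀ k ∈ Finset.Icc 1 K, 0 < c k) ∧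
    (∀ θ₁ θ₂ : ℝ, ∀ k ∈ Finset.Icc 1 K,
      astar θ₂ k - astar θ₁ k = c k * (θ₂ - θ₁)) := by
  -- positivity of 1 - partial sums of c
  have hpos : ∀ k, 1 ≤ k → k ≤ K → 0 < 1 - ∑ i ∈ Finset.Ico 1 k, c i := by
    intro k hk1 hkK
    induction k, hk1 using Nat.le_induction with
    | base => simp
    | succ k hk ih =>
      have hkK' : k ≤ K - 1 := by omega
      have hmem : k ∈ Finset.Icc 1 (K - 1) := Finset.mem_Icc.mpr ⟨hk, hkK'⟩
      have hmemK : k ∈ Finset.Icc 1 K := Finset.mem_Icc.mpr ⟨hk, by omega⟩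
      have hDk := hD k hmemK
      have hS : 0 < 1 - ∑ i ∈ Finset.Ico 1 k, c i := ih (by omega)
      rw [Finset.sum_Ico_succ_top hk, hc k hmem]
      have : 1 - ((∑ i ∈ Finset.Ico 1 k, c i) + D k * (1 - ∑ i ∈ Finset.Ico 1 k, c i))
          = (1 - ∑ i ∈ Finset.Ico 1 k, c i) * (1 - D k) := by ring
      rw [this]
      exact mul_pos hS (by linarith [hDk.2])
  have hcpos : ∀ k ∈ Finset.Icc 1 K, 0 < c k := by
    intro k hk
    rw [Finset.mem_Icc] at hk
    rcases eq_or_lt_of_le hk.2 with h | h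
    · rw [h, hcK]; exact hpos K (by omega) le_rfl
    · have hmem : k ∈ Finset.Icc 1 (K - 1) := Finset.mem_Icc.mpr ⟨hk.1, by omega⟩
      rw [hc k hmem]
      exact mul_pos (hD k (Finset.mem_Icc.mpr ⟨hk.1, hk.2⟩)).1 (hpos k hk.1 hk.2)
  refine ⟨hcpos, ?_⟩
  intro θ₁ θ₂
  -- partial sums of astar differences
  have hsum : ∀ k, 1 ≤ k → k ≤ K →
      (∑ i ∈ Finset.Ico 1 k, astar θ₂ i) - (∑ i ∈ Finset.Ico 1 k, astar θ₁ i)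
        = (∑ i ∈ Finset.Ico 1 k, c i) * (θ₂ - θ₁) := by
    intro k hk1 hkK
    induction k, hk1 using Nat.le_induction with
    | base => simp
    | succ k hk ih =>
      have hkK' : k ≤ K - 1 := by omega
      have hmem : k ∈ Finset.Icc 1 (K - 1) := Finset.mem_Icc.mpr ⟨hk, hkK'⟩
      have ih' := ih (by omega)
      rw [Finset.sum_Ico_succ_top hk, Finset.sum_Ico_succ_top hk, Finset.sum_Ico_succ_top hk,
        hastar θ₂ k hmem, hastar θ₁ k hmem, hc k hmem]
      linear_combination (1 - D k) * ih'
  intro k hk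
  rw [Finset.mem_Icc] at hk
  rcases eq_or_lt_of_le hk.2 with h | h
  · subst h
    rw [hastarK θ₁, hastarK θ₂, hcK]
    have := hsum k (by omega) le_rfl
    linear_combination -this
  · have hmem : k ∈ Finset.Icc 1 (K - 1) := Finset.mem_Icc.mpr ⟨hk.1, by omega⟩
    rw [hastar θ₂ k hmem, hastar θ₁ k hmem, hc k hmem]
    have := hsum k hk.1 hk.2
    linear_combination (-(D k)) * this
end

section
/- Let K ≥ 1, σ² > 0, G_k > 0 and A_k ≥ 0 for 1 ≤ k ≤ K, and let P > 0. Define P_k^Min by the backward recursion P_k^Min = A_k·(Σ_{i=k+1}^K P_i^Min + σ²/G_k) and P_Min := Σ_{k=1}^K P_k^Min. Then there exists a ∈ ℝ^K with Σ_{k=1}^K a_k ≤ 1 and a_k ≥ A_k·(Σ_{i=k+1}^K a_i + σ²/(P·G_k)) for all 1 ≤ k ≤ K if and only if P ≥ P_Min. -/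
/-- Feasibility characterization of the EE maximization problem (5): there exists a power
allocation `a` with `∑ a_k ≤ 1` satisfying all QoS constraints
`a_k ≥ A_k (∑_{i>k} a_i + σ²/(P G_k))` if and only if `P ≥ P_Min`, where
`P_Min = ∑ P_k^Min` with `P_k^Min = A_k (∑_{i>k} P_i^Min + σ²/G_k)` (Theorem 1). -/
theorem stmt_10 (K : ℕ) (hK : 1 ≤ K) (σ2 : ℝ) (hσ : 0 < σ2)
    (G A : ℕ → ℝ)
    (hG : ∀ k ∈ Finset.Icc 1 K, 0 < G k)
    (hA : ∀ k ∈ Finset.Icc 1 K, 0 ≤ A k)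
    (P : ℝ) (hP : 0 < P)
    (PMin : ℕ → ℝ)
    (hPMin : ∀ k ∈ Finset.Icc 1 K,
      PMin k = A k * ((∑ i ∈ Finset.Ioc k K, PMin i) + σ2 / G k)) :
    (∃ a : ℕ → ℝ, (∑ k ∈ Finset.Icc 1 K, a k) ≤ 1 ∧
      ∀ k ∈ Finset.Icc 1 K,
        A k * ((∑ i ∈ Finset.Ioc k K, a i) + σ2 / (P * G k)) ≤ a k) ↔
    (∑ k ∈ Finset.Icc 1 K, PMin k) ≤ P := by
  constructor
  · rintro ⟨a, hsum, hcon⟩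
    have key : ∀ n : ℕ, ∀ k ∈ Finset.Icc 1 K, K - k ≤ n → PMin k ≤ P * a k := by
      intro n
      induction n with
      | zero =>
        intro k hk hle
        simp only [Finset.mem_Icc] at hk
        have hkK : k = K := le_antisymm hk.2 (by omega)
        have hk' : k ∈ Finset.Icc 1 K := Finset.mem_Icc.mpr hk
        have hGk := hG k hk'
        have h1 := hcon k hk'
        have hempty : Finset.Ioc k K = ∅ := Finset.Ioc_eq_empty (by omega)
        rw [hPMin k hk']
        simp only [hempty, Finset.sum_empty, zero_add] at h1 ⊢
        calc A k * (σ2 / G k) = P * (A k * (σ2 / (P * G k))) := by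
              field_simp
          _ ≤ P * a k := mul_le_mul_of_nonneg_left h1 hP.le
      | succ n ih =>
        intro k hk hle
        simp only [Finset.mem_Icc] at hk
        have hk' : k ∈ Finset.Icc 1 K := Finset.mem_Icc.mpr hk
        have hsumle : (∑ i ∈ Finset.Ioc k K, PMin i) ≤ ∑ i ∈ Finset.Ioc k K, P * a i := by
          apply Finset.sum_le_sum
          intro i hi
          simp only [Finset.mem_Ioc] at hi
          exact ih i (Finset.mem_Icc.mpr ⟨by omega, hi.2⟩) (by omega)
        have h1 := hcon k hk'
        rw [hPMin k hk']
        calc A k * ((∑ i ∈ Finset.Ioc k K, PMin i) + σ2 / G k)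
            ≤ A k * ((∑ i ∈ Finset.Ioc k K, P * a i) + σ2 / G k) := by
              apply mul_le_mul_of_nonneg_left _ (hA k hk')
              linarith
          _ = P * (A k * ((∑ i ∈ Finset.Ioc k K, a i) + σ2 / (P * G k))) := by
              rw [← Finset.mul_sum]
              have hGk := (hG k hk').ne'
              field_simp
          _ ≤ P * a k := mul_le_mul_of_nonneg_left h1 hP.le
    calc (∑ k ∈ Finset.Icc 1 K, PMin k) ≤ ∑ k ∈ Finset.Icc 1 K, P * a k := by
          apply Finset.sum_le_sum
          intro k hk
          exact key (K - k) k hk le_rfl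
      _ = P * ∑ k ∈ Finset.Icc 1 K, a k := (Finset.mul_sum _ _ _).symm
      _ ≤ P * 1 := mul_le_mul_of_nonneg_left hsum hP.le
      _ = P := mul_one P
  · intro h
    refine ⟨fun k => PMin k / P, ?_, ?_⟩
    · rw [← Finset.sum_div]
      exact div_le_one_of_le₀ h hP.le
    · intro k hk
      have hGk := hG k hk
      have : (∑ i ∈ Finset.Ioc k K, PMin i / P) = (∑ i ∈ Finset.Ioc k K, PMin i) / P :=
        (Finset.sum_div _ _ _).symm
      rw [this]
      have : A k * ((∑ i ∈ Finset.Ioc k K, PMin i) / P + σ2 / (P * G k))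
          = (A k * ((∑ i ∈ Finset.Ioc k K, PMin i) + σ2 / G k)) / P := by
        field_simp
      rw [this, ← hPMin k hk]
end

section
/- Let K ≥ 2, σ² > 0, C_k = P·G_k with P > 0 and G_k > 0, A_k ≥ 0 and D_k := A_k/(1+A_k) for 1 ≤ k ≤ K. Let P_Min := Σ_{k=1}^K P_k^Min with P_k^Min = A_k·(Σ_{i=k+1}^K P_i^Min + σ²/G_k), and let θ ∈ ℝ with P_Min/P ≤ θ. Define a*_k(θ) by a*_k(θ) = D_k·(θ − Σ_{i=1}^{k−1} a*_i(θ)) + D_k·σ²/C_k for k ≤ K−1 and a*_K(θ) = θ − Σ_{i=1}^{K−1} a*_i(θ). Then Σ_{k=1}^K a*_k(θ) = θ, the constraints a*_k(θ) ≥ A_k·(Σ_{i=k+1}^K a*_i(θ) + σ²/C_k) hold with equality for 1 ≤ k ≤ K−1, and the constraint a*_K(θ) ≥ A_K·σ²/C_K holds (with equality exactly when θ·P = P_Min). -/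
/-- Feasibility of the closed-form allocation `a*(θ)` of Theorem 2 whenever
`θ ≥ P_Min/P`: the coefficients sum to `θ`, the first `K−1` QoS constraints hold with
equality, and the `K`-th constraint `a*_K ≥ A_K σ²/C_K` holds, with equality exactly
when `θ P = P_Min`. -/
theorem stmt_11 (K : ℕ) (hK : 2 ≤ K) (σ2 : ℝ) (hσ : 0 < σ2)
    (P : ℝ) (hP : 0 < P)
    (G : ℕ → ℝ) (hG : ∀ k ∈ Finset.Icc 1 K, 0 < G k)
    (C : ℕ → ℝ) (hC : ∀ k, C k = P * G k)
    (A : ℕ → ℝ) (hA : ∀ k ∈ Finset.Icc 1 K, 0 ≤ A k)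
    (D : ℕ → ℝ) (hD : ∀ k, D k = A k / (1 + A k))
    (PMin : ℕ → ℝ)
    (hPMin : ∀ k ∈ Finset.Icc 1 K,
      PMin k = A k * ((∑ i ∈ Finset.Ioc k K, PMin i) + σ2 / G k))
    (θ : ℝ) (hθ : (∑ k ∈ Finset.Icc 1 K, PMin k) / P ≤ θ)
    (astar : ℕ → ℝ)
    (hastar : ∀ k ∈ Finset.Icc 1 (K - 1),
      astar k = D k * (θ - ∑ i ∈ Finset.Ico 1 k, astar i) + D k * σ2 / C k)
    (hastarK : astar K = θ - ∑ i ∈ Finset.Ico 1 K, astar i) :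
    (∑ k ∈ Finset.Icc 1 K, astar k) = θ ∧
    (∀ k ∈ Finset.Icc 1 (K - 1),
      astar k = A k * ((∑ i ∈ Finset.Ioc k K, astar i) + σ2 / C k)) ∧
    A K * (σ2 / C K) ≤ astar K ∧
    (astar K = A K * (σ2 / C K) ↔ θ * P = ∑ k ∈ Finset.Icc 1 K, PMin k) := by
  have hK1 : 1 ≤ K := le_trans (by norm_num) hK
  have hPne : P ≠ 0 := ne_of_gt hP
  -- basic positivity facts
  have hCpos : ∀ k ∈ Finset.Icc 1 K, 0 < C k := by
    intro k hk; rw [hC]; exact mul_pos hP (hG k hk)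
  have h1A : ∀ k ∈ Finset.Icc 1 K, (0:ℝ) < 1 + A k := by
    intro k hk; linarith [hA k hk]
  -- splitting lemmas
  have eIcc : ∀ m, Finset.Icc 1 m = Finset.Ioc 0 m := fun m => Finset.Icc_add_one_left_eq_Ioc 0 m
  have tail : ∀ (f : ℕ → ℝ) (k : ℕ), k ≤ K →
      (∑ i ∈ Finset.Ioc k K, f i)
        = (∑ i ∈ Finset.Icc 1 K, f i) - ∑ i ∈ Finset.Icc 1 k, f i := by
    intro f k h2
    have h := Finset.sum_Ioc_consecutive f (Nat.zero_le k) h2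
    rw [eIcc, eIcc]; linarith
  have top : ∀ (f : ℕ → ℝ) (k : ℕ), 1 ≤ k →
      (∑ i ∈ Finset.Icc 1 k, f i) = (∑ i ∈ Finset.Ico 1 k, f i) + f k := by
    intro f k h1
    rw [← Finset.Ico_add_one_right_eq_Icc, Finset.sum_Ico_succ_top h1]
  -- Part 1 : the sum is θ
  have hsum : (∑ k ∈ Finset.Icc 1 K, astar k) = θ := by
    rw [top astar K hK1, hastarK]; ring
  -- the normalized minimum-power allocation
  set b : ℕ → ℝ := fun k => PMin k / P with hbdef
  set θ0 : ℝ := ∑ k ∈ Finset.Icc 1 K, b k with hθ0def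
  have hθ0T : θ0 = (∑ k ∈ Finset.Icc 1 K, PMin k) / P := by
    rw [hθ0def, Finset.sum_div]
  have hθ0le : θ0 ≤ θ := by rw [hθ0T]; exact hθ
  have hb : ∀ k ∈ Finset.Icc 1 K,
      b k = A k * ((∑ i ∈ Finset.Ioc k K, b i) + σ2 / C k) := by
    intro k hk
    have hGk := hG k hk
    have hCk := hCpos k hk
    have h := hPMin k hk
    have hsdiv : (∑ i ∈ Finset.Ioc k K, b i) = (∑ i ∈ Finset.Ioc k K, PMin i) / P := by
      rw [Finset.sum_div]
    rw [hbdef]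
    simp only []
    rw [h, hsdiv]
    have hCk' : C k = P * G k := hC k
    field_simp
    rw [hCk']
    ring
  -- recursion for b in the same form as hastar
  have hb2 : ∀ k, 1 ≤ k → k ≤ K - 1 →
      b k = D k * (θ0 - ∑ i ∈ Finset.Ico 1 k, b i) + D k * σ2 / C k := by
    intro k h1 h2
    have hkK : k ≤ K := by omega
    have hkmem : k ∈ Finset.Icc 1 K := Finset.mem_Icc.mpr ⟨h1, hkK⟩
    have h1Ak := h1A k hkmem
    have hCk := hCpos k hkmem
    have ht := tail b k hkK
    rw [top b k h1] at ht
    have h := hb k hkmem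
    rw [ht] at h
    rw [hD]
    have h1Ak' : (1 + A k) ≠ 0 := ne_of_gt h1Ak
    have hCk' : C k ≠ 0 := ne_of_gt hCk
    field_simp at h ⊢
    nlinarith [h]
  -- Part 2 : equality constraints for k ≤ K-1
  have part2 : ∀ k ∈ Finset.Icc 1 (K - 1),
      astar k = A k * ((∑ i ∈ Finset.Ioc k K, astar i) + σ2 / C k) := by
    intro k hk
    obtain ⟨h1, h2⟩ := Finset.mem_Icc.mp hk
    have hkK : k ≤ K := by omega
    have hkmem : k ∈ Finset.Icc 1 K := Finset.mem_Icc.mpr ⟨h1, hkK⟩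
    have h1Ak := h1A k hkmem
    have hCk := hCpos k hkmem
    have ht := tail astar k hkK
    rw [top astar k h1, hsum] at ht
    rw [ht]
    have e1 : (1 + A k) * astar k
        = A k * ((θ - ∑ i ∈ Finset.Ico 1 k, astar i) + σ2 / C k) := by
      rw [hastar k hk, hD]
      have h1Ak' : (1 + A k) ≠ 0 := ne_of_gt h1Ak
      have hCk' : C k ≠ 0 := ne_of_gt hCk
      field_simp
    linear_combination e1
  -- key induction : difference of remainders
  have key : ∀ k, 1 ≤ k → k ≤ K →
      (θ - ∑ i ∈ Finset.Ico 1 k, astar i) - (θ0 - ∑ i ∈ Finset.Ico 1 k, b i)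
        = (θ - θ0) * ∏ i ∈ Finset.Ico 1 k, (1 - D i) := by
    intro k
    induction k with
    | zero => intro h; omega
    | succ n ih =>
      intro _ hnK
      rcases Nat.eq_zero_or_pos n with hn0 | hn1
      · subst hn0; simp
      · have hnmem : n ∈ Finset.Icc 1 (K - 1) := Finset.mem_Icc.mpr ⟨hn1, by omega⟩
        have ha := hastar n hnmem
        have hb' := hb2 n hn1 (by omega)
        have ihv := ih hn1 (by omega)
        rw [Finset.sum_Ico_succ_top hn1, Finset.sum_Ico_succ_top hn1,
            Finset.prod_Ico_succ_top hn1, ha, hb']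
        linear_combination (1 - D n) * ihv
  have keyK := key K hK1 le_rfl
  -- b K equals A K σ2 / C K and equals the remainder at K
  have hbK : b K = A K * (σ2 / C K) := by
    have h := hb K (Finset.mem_Icc.mpr ⟨hK1, le_rfl⟩)
    simpa using h
  have hbKrem : b K = θ0 - ∑ i ∈ Finset.Ico 1 K, b i := by
    have := top b K hK1
    rw [hθ0def]; linarith [this]
  -- positivity of the product
  have hprod : 0 < ∏ i ∈ Finset.Ico 1 K, (1 - D i) := by
    apply Finset.prod_pos
    intro i hi
    obtain ⟨hi1, hi2⟩ := Finset.mem_Ico.mp hi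
    have himem : i ∈ Finset.Icc 1 K := Finset.mem_Icc.mpr ⟨hi1, le_of_lt hi2⟩
    have hAi := hA i himem
    have : D i < 1 := by
      rw [hD, div_lt_one (by linarith)]; linarith
    linarith
  have hmain : astar K - A K * (σ2 / C K)
      = (θ - θ0) * ∏ i ∈ Finset.Ico 1 K, (1 - D i) := by
    rw [hastarK]
    rw [← keyK, ← hbKrem, hbK]
  refine ⟨hsum, part2, ?_, ?_⟩
  · nlinarith [mul_nonneg (by linarith : (0:ℝ) ≤ θ - θ0) (le_of_lt hprod)]
  · constructor
    · intro h
      have hz : (θ - θ0) * ∏ i ∈ Finset.Ico 1 K, (1 - D i) = 0 := by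
        rw [← hmain, h]; ring
      have hθeq : θ = θ0 := by
        rcases mul_eq_zero.mp hz with h' | h'
        · linarith
        · exact absurd h' (ne_of_gt hprod)
      rw [hθeq, hθ0T]
      field_simp
    · intro h
      have hθeq : θ = θ0 := by
        rw [hθ0T]
        field_simp
        linarith [h]
      have : astar K - A K * (σ2 / C K) = 0 := by
        rw [hmain, hθeq]; ring
      linarith
end

section
/- Let K ≥ 2, σ² > 0, 0 < C_1 ≤ … ≤ C_K, R_k^Min > 0 with A_k := 2^{R_k^Min} − 1 and D_k := A_k/(1+A_k), and let a*_k(θ) be defined by a*_k(θ) = D_k·(θ − Σ_{i=1}^{k−1} a*_i(θ)) + D_k·σ²/C_k for k ≤ K−1 and a*_K(θ) = θ − Σ_{i=1}^{K−1} a*_i(θ). Then for every θ with a*_K(θ) ≥ A_K·σ²/C_K, the achievable sum rate at a*(θ) satisfies Σ_{k=1}^K log₂(1 + C_k·a*_k(θ)/(C_k·Σ_{i=k+1}^K a*_i(θ) + σ²)) = Σ_{k=1}^{K−1} R_k^Min + log₂(1 + C_K·a*_K(θ)/σ²). -/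
/-!
Write `S_k = ∑_{i=k+1}^K a*_i` for the power of the users decoded after user `k`. Since the
allocation spends all of `θ`, the remaining power in the defining recursion is
`θ − ∑_{i<k} a*_i = a*_k + S_k`, and with `D_k = A_k/(1+A_k)` the recursion solves to
`a*_k = A_k (S_k + σ²/C_k)`. Hence the SINR of user `k < K` is exactly `A_k = 2^{R_k^Min} − 1`, so its
rate is `R_k^Min`, while user `K` sees no interference. The only analytic point is that the SINR
denominators `C_k S_k + σ²` do not vanish: downward induction from `a*_K ≥ 0` shows all `a*_k ≥ 0`.
-/

open Finset

theorem Finset.sum_Icc_one_eq_sum_Ico_add_add_sum_Ioc {M : Type*} [AddCommMonoid M]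
    (f : ℕ → M) {k K : ℕ} (hk₁ : 1 ≤ k) (hkK : k ≤ K) :
    ∑ i ∈ Icc 1 K, f i = ∑ i ∈ Ico 1 k, f i + (f k + ∑ i ∈ Ioc k K, f i) := by
  rw [← Ico_add_one_right_eq_Icc, ← sum_Ico_consecutive f hk₁ (by omega), Ico_add_one_right_eq_Icc,
    Icc_eq_cons_Ioc hkK, sum_cons]

theorem Finset.sum_Ioc_nonneg_of_forall_tail {M : Type*} [AddCommMonoid M] [PartialOrder M]
    [IsOrderedAddMonoid M] {f : ℕ → M} {K : ℕ}
    (h : ∀ k, 0 < k → k ≤ K → 0 ≤ ∑ i ∈ Ioc k K, f i → 0 ≤ f k) (k : ℕ) :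
    0 ≤ ∑ i ∈ Ioc k K, f i := by
  rcases le_or_gt k K with hkK | hKk
  · induction hkK using Nat.decreasingInduction with
    | self => simp
    | of_succ k hk ih =>
      rw [← sum_Ioc_consecutive f k.le_succ hk, Nat.Ioc_succ_singleton, sum_singleton]
      exact add_nonneg (h (k + 1) k.succ_pos hk ih) ih
  · simp [Ioc_eq_empty_of_le hKk.le]

theorem eq_mul_add_of_eq_div_one_add_mul {a s c σ A : ℝ} (hA : 1 + A ≠ 0)
    (h : a = A / (1 + A) * (a + s) + A / (1 + A) * σ / c) :
    a = A * (s + σ / c) := by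
  field_simp at h
  linear_combination h

theorem Real.logb_one_add_div_eq {c s σ R : ℝ} (hc : c ≠ 0) (hden : c * s + σ ≠ 0) :
    logb 2 (1 + c * ((2 ^ R - 1) * (s + σ / c)) / (c * s + σ)) = R := by
  have : c * ((2 ^ R - 1) * (s + σ / c)) = (2 ^ R - 1) * (c * s + σ) := by
    field_simp
  rw [this, mul_div_cancel_right₀ _ hden, add_sub_cancel, Real.logb_rpow two_pos (by norm_num)]

theorem stmt_12_general (K : ℕ) (hK : 2 ≤ K) (σ2 : ℝ) (hσ : 0 < σ2)
    (C : ℕ → ℝ)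
    (hCpos : ∀ k ∈ Finset.Icc 1 K, 0 < C k)
    (RMin : ℕ → ℝ) (hR : ∀ k ∈ Finset.Icc 1 K, 0 < RMin k)
    (A : ℕ → ℝ) (hA : ∀ k, A k = (2 : ℝ) ^ RMin k - 1)
    (D : ℕ → ℝ) (hD : ∀ k, D k = A k / (1 + A k))
    (θ : ℝ) (astar : ℕ → ℝ)
    (hastar : ∀ k ∈ Finset.Icc 1 (K - 1),
      astar k = D k * (θ - ∑ i ∈ Finset.Ico 1 k, astar i) + D k * σ2 / C k)
    (hastarK : astar K = θ - ∑ i ∈ Finset.Ico 1 K, astar i)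
    (hfeas : A K * (σ2 / C K) ≤ astar K) :
    ∑ k ∈ Finset.Icc 1 K,
        Real.logb 2
          (1 + C k * astar k / (C k * (∑ i ∈ Finset.Ioc k K, astar i) + σ2)) =
      (∑ k ∈ Finset.Icc 1 (K - 1), RMin k) +
        Real.logb 2 (1 + C K * astar K / σ2) := by
  have hA_nonneg : ∀ k ∈ Icc 1 K, 0 ≤ A k := fun k hk => by
    rw [hA]; linarith [Real.one_lt_rpow (by norm_num : (1 : ℝ) < 2) (hR k hk)]
  have hsum : ∑ i ∈ Icc 1 K, astar i = θ := by
    rw [sum_Icc_one_eq_sum_Ico_add_add_sum_Ioc astar (by omega) le_rfl, hastarK]; simp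
  have hpower : ∀ k ∈ Icc 1 (K - 1),
      astar k = A k * (∑ i ∈ Ioc k K, astar i + σ2 / C k) := by
    intro k hk
    have hrec := hastar k hk
    rw [hD, ← hsum, sum_Icc_one_eq_sum_Ico_add_add_sum_Ioc astar (mem_Icc.mp hk).1
      (by grind), add_sub_cancel_left] at hrec
    exact eq_mul_add_of_eq_div_one_add_mul (by rw [hA, add_sub_cancel]; positivity) hrec
  have htail : ∀ k, 0 ≤ ∑ i ∈ Ioc k K, astar i :=
    sum_Ioc_nonneg_of_forall_tail fun k hk₀ hkK htail_k => by
      have hk : k ∈ Icc 1 K := mem_Icc.mpr ⟨hk₀, hkK⟩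
      have hnoise : 0 ≤ σ2 / C k := div_nonneg hσ.le (hCpos k hk).le
      rcases hkK.lt_or_eq with hlt | rfl
      · rw [hpower k (mem_Icc.mpr ⟨hk₀, by omega⟩)]
        exact mul_nonneg (hA_nonneg k hk) (add_nonneg htail_k hnoise)
      · exact (mul_nonneg (hA_nonneg k hk) hnoise).trans hfeas
  have hrate : ∀ k ∈ Icc 1 (K - 1),
      Real.logb 2 (1 + C k * astar k / (C k * (∑ i ∈ Ioc k K, astar i) + σ2)) = RMin k := by
    intro k hk
    have hCk : 0 < C k := hCpos k (by grind)
    rw [hpower k hk, hA]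
    exact Real.logb_one_add_div_eq hCk.ne'
      (add_pos_of_nonneg_of_pos (mul_nonneg hCk.le (htail k)) hσ).ne'
  have hsplit := sum_Icc_succ_top (show 1 ≤ K - 1 + 1 by omega) fun k =>
    Real.logb 2 (1 + C k * astar k / (C k * (∑ i ∈ Ioc k K, astar i) + σ2))
  rw [Nat.sub_add_cancel (by omega)] at hsplit
  rw [hsplit, sum_congr rfl hrate]
  simp

/-- At the optimal allocation `a*(θ)` of Theorem 2, the first `K−1` users achieve
exactly their minimum rates, so the achievable sum rate equals
`∑_{k=1}^{K−1} R_k^Min + log₂(1 + C_K a*_K(θ)/σ²)`. -/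
theorem stmt_12 (K : ℕ) (hK : 2 ≤ K) (σ2 : ℝ) (hσ : 0 < σ2)
    (C : ℕ → ℝ)
    (hCpos : ∀ k ∈ Finset.Icc 1 K, 0 < C k)
    (hCmono : ∀ k ∈ Finset.Icc 1 (K - 1), C k ≤ C (k + 1))
    (RMin : ℕ → ℝ) (hR : ∀ k ∈ Finset.Icc 1 K, 0 < RMin k)
    (A : ℕ → ℝ) (hA : ∀ k, A k = (2 : ℝ) ^ RMin k - 1)
    (D : ℕ → ℝ) (hD : ∀ k, D k = A k / (1 + A k))
    (θ : ℝ) (astar : ℕ → ℝ)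
    (hastar : ∀ k ∈ Finset.Icc 1 (K - 1),
      astar k = D k * (θ - ∑ i ∈ Finset.Ico 1 k, astar i) + D k * σ2 / C k)
    (hastarK : astar K = θ - ∑ i ∈ Finset.Ico 1 K, astar i)
    (hfeas : A K * (σ2 / C K) ≤ astar K) :
    ∑ k ∈ Finset.Icc 1 K,
        Real.logb 2
          (1 + C k * astar k / (C k * (∑ i ∈ Finset.Ioc k K, astar i) + σ2)) =
      (∑ k ∈ Finset.Icc 1 (K - 1), RMin k) +
        Real.logb 2 (1 + C K * astar K / σ2) :=
  stmt_12_general K hK σ2 hσ C hCpos RMin hR A hA D hD θ astar hastar hastarK hfeas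
end

section
/- Let K ≥ 2, σ² > 0, 0 < C_1 ≤ C_2 ≤ … ≤ C_K, and D_k ∈ (0,1) for 1 ≤ k ≤ K. Let a*_k(θ) = D_k·(θ − Σ_{i=1}^{k−1} a*_i(θ)) + D_k·σ²/C_k for k ≤ K−1, a*_K(θ) = θ − Σ_{i=1}^{K−1} a*_i(θ), and x*_k(θ) := Σ_{i=k+1}^K a*_i(θ). Then the function N(θ) := log₂(C_1·θ + σ²) + Σ_{k=1}^{K−1} [ log₂(C_{k+1}·x*_k(θ) + σ²) − log₂(C_k·x*_k(θ) + σ²) ] is strictly concave on every interval I ⊆ { θ : θ > 0 and x*_k(θ) ≥ 0 for all 1 ≤ k ≤ K−1 }. -/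
/-!
Both `x ↦ log₂ (C₁ x + σ²)` and, for `0 < b ≤ a`, `x ↦ log₂ (a x + σ²) − log₂ (b x + σ²)` on
`[0, ∞)` are concave, the first strictly; the derivative of the second is
`σ² (a − b) / ((a x + σ²)(b x + σ²))`, which decreases in `x`. Unwinding the recursion of
Theorem 2 shows that every residual power `θ − ∑_{i ≤ k} a*_i(θ)`, hence every `x*_k(θ)`, is an
affine function of `θ`, and concavity is preserved under affine substitution and finite sums.
-/

open Real Finset

namespace ConcaveOn

theorem comp_mul_add {s t : Set ℝ} {f : ℝ → ℝ} (hf : ConcaveOn ℝ s f) (ht : Convex ℝ t)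
    {p q : ℝ} (hmaps : Set.MapsTo (fun x => p * x + q) t s) :
    ConcaveOn ℝ t (fun x => f (p * x + q)) := by
  refine ⟨ht, fun x hx y hy a b ha hb hab => ?_⟩
  have key := hf.2 (hmaps hx) (hmaps hy) ha hb hab
  simp only [smul_eq_mul] at key ⊢
  convert key using 2
  linear_combination q * hab.symm

theorem sum {ι : Type*} {s : Set ℝ} (hs : Convex ℝ s) (t : Finset ι) {f : ι → ℝ → ℝ}
    (hf : ∀ i ∈ t, ConcaveOn ℝ s (f i)) :
    ConcaveOn ℝ s (fun x => ∑ i ∈ t, f i x) := by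
  simpa only [Finset.sum_fn] using
    Finset.sum_induction f (ConcaveOn ℝ s) (fun _ _ => ConcaveOn.add) (concaveOn_const 0 hs) hf

end ConcaveOn

theorem StrictConcaveOn.comp_mul_add {s t : Set ℝ} {f : ℝ → ℝ} (hf : StrictConcaveOn ℝ s f)
    (ht : Convex ℝ t) {p q : ℝ} (hp : p ≠ 0) (hmaps : Set.MapsTo (fun x => p * x + q) t s) :
    StrictConcaveOn ℝ t (fun x => f (p * x + q)) := by
  refine ⟨ht, fun x hx y hy hxy a b ha hb hab => ?_⟩
  have hne : p * x + q ≠ p * y + q := fun h => hxy (mul_left_cancel₀ hp (add_right_cancel h))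
  have key := hf.2 (hmaps hx) (hmaps hy) hne ha hb hab
  simp only [smul_eq_mul] at key ⊢
  convert key using 2
  linear_combination q * hab.symm

theorem strictConcaveOn_logb_Ioi {b : ℝ} (hb : 1 < b) : StrictConcaveOn ℝ (Set.Ioi 0) (logb b) := by
  refine ⟨convex_Ioi 0, fun x hx y hy hxy s t hs ht hst => ?_⟩
  have key := strictConcaveOn_log_Ioi.2 hx hy hxy hs ht hst
  simp only [logb, smul_eq_mul] at key ⊢
  rw [← mul_div_assoc, ← mul_div_assoc, ← add_div]
  exact div_lt_div_of_pos_right key (log_pos hb)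

theorem hasDerivAt_log_mul_add_sub_log_mul_add {a b c x : ℝ} (ha : 0 < a * x + c)
    (hb : 0 < b * x + c) :
    HasDerivAt (fun y => log (a * y + c) - log (b * y + c))
      (c * (a - b) / ((a * x + c) * (b * x + c))) x := by
  have hderiv : ∀ d, 0 < d * x + c → HasDerivAt (fun y => log (d * y + c)) (d / (d * x + c)) x :=
    fun d hd => by simpa using (((hasDerivAt_id x).const_mul d).add_const c).log hd.ne'
  refine ((hderiv a ha).sub (hderiv b hb)).congr_deriv ?_
  rw [div_sub_div _ _ ha.ne' hb.ne']
  ring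

theorem concaveOn_log_mul_add_sub_log_mul_add {a b c : ℝ} (hb : 0 < b) (hba : b ≤ a)
    (hc : 0 < c) : ConcaveOn ℝ (Set.Ici 0) (fun x => log (a * x + c) - log (b * x + c)) := by
  have ha : 0 < a := hb.trans_le hba
  have hpos : ∀ d, 0 < d → ∀ x : ℝ, 0 ≤ x → 0 < d * x + c := fun d hd x hx => by positivity
  have hderiv : ∀ x : ℝ, 0 ≤ x → HasDerivAt (fun y => log (a * y + c) - log (b * y + c))
      (c * (a - b) / ((a * x + c) * (b * x + c))) x := fun x hx =>
    hasDerivAt_log_mul_add_sub_log_mul_add (hpos a ha x hx) (hpos b hb x hx)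
  refine AntitoneOn.concaveOn_of_deriv (convex_Ici 0)
    (fun x hx => (hderiv x hx).continuousAt.continuousWithinAt)
    (fun x hx => (hderiv x (interior_subset hx)).differentiableAt.differentiableWithinAt) ?_
  intro x hx y hy hxy
  rw [interior_Ici, Set.mem_Ioi] at hx hy
  rw [(hderiv x hx.le).deriv, (hderiv y hy.le).deriv]
  apply div_le_div_of_nonneg_left (mul_nonneg hc.le (sub_nonneg.2 hba))
    (mul_pos (hpos a ha x hx.le) (hpos b hb x hx.le))
  gcongr

theorem concaveOn_logb_mul_add_sub_logb_mul_add {β a b c : ℝ} (hβ : 1 < β) (hb : 0 < b)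
    (hba : b ≤ a) (hc : 0 < c) :
    ConcaveOn ℝ (Set.Ici 0) (fun x => logb β (a * x + c) - logb β (b * x + c)) := by
  refine ((concaveOn_log_mul_add_sub_log_mul_add hb hba hc).smul
    (inv_nonneg.2 (log_nonneg hβ.le))).congr fun x _ => ?_
  simp only [logb, smul_eq_mul]
  ring

theorem exists_affine_sub_sum_Ico {n : ℕ} {u : ℝ → ℕ → ℝ} {D c : ℕ → ℝ}
    (hu : ∀ θ, ∀ k ∈ Icc 1 n, u θ k = D k * (θ - ∑ i ∈ Ico 1 k, u θ i) + c k) :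
    ∀ k ≤ n, ∃ p q : ℝ, ∀ θ, θ - ∑ i ∈ Ico 1 (k + 1), u θ i = p * θ + q := by
  intro k
  induction k with
  | zero => exact fun _ => ⟨1, 0, fun θ => by simp⟩
  | succ k ih =>
    intro hk
    obtain ⟨p, q, hpq⟩ := ih (by omega)
    refine ⟨(1 - D (k + 1)) * p, (1 - D (k + 1)) * q - c (k + 1), fun θ => ?_⟩
    rw [sum_Ico_succ_top (by omega), hu θ (k + 1) (by simp only [mem_Icc]; omega)]
    linear_combination (1 - D (k + 1)) * hpq θ

theorem sum_Ioc_eq_sub_sum_Ico {f : ℕ → ℝ} {t : ℝ} {k n : ℕ}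
    (hf : f n = t - ∑ i ∈ Ico 1 n, f i) (hk : k < n) :
    ∑ i ∈ Ioc k n, f i = t - ∑ i ∈ Ico 1 (k + 1), f i := by
  rw [← Finset.Ico_add_one_add_one_eq_Ioc, sum_Ico_succ_top (by omega), hf,
    ← sum_Ico_consecutive f (by omega : 1 ≤ k + 1) (by omega : k + 1 ≤ n)]
  ring

theorem stmt_13_general (K : ℕ) (hK : 2 ≤ K) (σ2 : ℝ) (hσ : 0 < σ2)
    (C : ℕ → ℝ)
    (hCpos : ∀ k ∈ Finset.Icc 1 K, 0 < C k)
    (hCmono : ∀ k ∈ Finset.Icc 1 (K - 1), C k ≤ C (k + 1))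
    (D : ℕ → ℝ)
    (astar : ℝ → ℕ → ℝ)
    (hastar : ∀ θ : ℝ, ∀ k ∈ Finset.Icc 1 (K - 1),
      astar θ k = D k * (θ - ∑ i ∈ Finset.Ico 1 k, astar θ i) + D k * σ2 / C k)
    (hastarK : ∀ θ : ℝ, astar θ K = θ - ∑ i ∈ Finset.Ico 1 K, astar θ i)
    (xstar : ℝ → ℕ → ℝ)
    (hxstar : ∀ θ k, xstar θ k = ∑ i ∈ Finset.Ioc k K, astar θ i)
    (N : ℝ → ℝ)
    (hN : ∀ θ : ℝ, N θ = Real.logb 2 (C 1 * θ + σ2) +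
      ∑ k ∈ Finset.Icc 1 (K - 1),
        (Real.logb 2 (C (k + 1) * xstar θ k + σ2) -
          Real.logb 2 (C k * xstar θ k + σ2)))
    (I : Set ℝ) (hIconv : Convex ℝ I)
    (hI : I ⊆ {θ : ℝ | 0 < θ ∧ ∀ k ∈ Finset.Icc 1 (K - 1), 0 ≤ xstar θ k}) :
    StrictConcaveOn ℝ I N := by
  have hC1 : 0 < C 1 := hCpos 1 (by simp only [mem_Icc]; omega)
  have hxstar_affine : ∀ k ∈ Icc 1 (K - 1), ∃ p q : ℝ, ∀ θ, xstar θ k = p * θ + q := by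
    intro k hk
    simp only [mem_Icc] at hk
    obtain ⟨p, q, hpq⟩ := exists_affine_sub_sum_Ico (hastar ·) k hk.2
    exact ⟨p, q, fun θ => by rw [hxstar, sum_Ioc_eq_sub_sum_Ico (hastarK θ) (by omega), hpq]⟩
  have hfirst : StrictConcaveOn ℝ I (fun θ => logb 2 (C 1 * θ + σ2)) :=
    (strictConcaveOn_logb_Ioi one_lt_two).comp_mul_add hIconv hC1.ne'
      fun θ hθ => show 0 < C 1 * θ + σ2 from by have := (hI hθ).1; positivity
  have hterms : ∀ k ∈ Icc 1 (K - 1), ConcaveOn ℝ I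
      (fun θ => logb 2 (C (k + 1) * xstar θ k + σ2) - logb 2 (C k * xstar θ k + σ2)) := by
    intro k hk
    obtain ⟨p, q, hpq⟩ := hxstar_affine k hk
    have hCk : 0 < C k := hCpos k (by simp only [mem_Icc] at hk ⊢; omega)
    simp only [hpq]
    exact (concaveOn_logb_mul_add_sub_logb_mul_add one_lt_two hCk (hCmono k hk) hσ).comp_mul_add
      hIconv fun θ hθ => show 0 ≤ p * θ + q from hpq θ ▸ (hI hθ).2 k hk
  rw [funext hN]
  exact hfirst.add_concaveOn (ConcaveOn.sum hIconv _ hterms)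

/-- Strict concavity of the numerator `N(θ)` of the energy efficiency after substituting
the optimal power allocation `a*(θ)` of Theorem 2:
`N(θ) = log₂(C_1 θ + σ²) + ∑_{k=1}^{K−1} [log₂(C_{k+1} x*_k(θ) + σ²) − log₂(C_k x*_k(θ) + σ²)]`
is strictly concave on every interval contained in
`{θ : θ > 0 and x*_k(θ) ≥ 0 for all 1 ≤ k ≤ K−1}`. -/
theorem stmt_13 (K : ℕ) (hK : 2 ≤ K) (σ2 : ℝ) (hσ : 0 < σ2)
    (C : ℕ → ℝ)
    (hCpos : ∀ k ∈ Finset.Icc 1 K, 0 < C k)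
    (hCmono : ∀ k ∈ Finset.Icc 1 (K - 1), C k ≤ C (k + 1))
    (D : ℕ → ℝ) (hD : ∀ k ∈ Finset.Icc 1 K, D k ∈ Set.Ioo (0 : ℝ) 1)
    (astar : ℝ → ℕ → ℝ)
    (hastar : ∀ θ : ℝ, ∀ k ∈ Finset.Icc 1 (K - 1),
      astar θ k = D k * (θ - ∑ i ∈ Finset.Ico 1 k, astar θ i) + D k * σ2 / C k)
    (hastarK : ∀ θ : ℝ, astar θ K = θ - ∑ i ∈ Finset.Ico 1 K, astar θ i)
    (xstar : ℝ → ℕ → ℝ)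
    (hxstar : ∀ θ k, xstar θ k = ∑ i ∈ Finset.Ioc k K, astar θ i)
    (N : ℝ → ℝ)
    (hN : ∀ θ : ℝ, N θ = Real.logb 2 (C 1 * θ + σ2) +
      ∑ k ∈ Finset.Icc 1 (K - 1),
        (Real.logb 2 (C (k + 1) * xstar θ k + σ2) -
          Real.logb 2 (C k * xstar θ k + σ2)))
    (I : Set ℝ) (hIconv : Convex ℝ I)
    (hI : I ⊆ {θ : ℝ | 0 < θ ∧ ∀ k ∈ Finset.Icc 1 (K - 1), 0 ≤ xstar θ k}) :
    StrictConcaveOn ℝ I N :=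
  stmt_13_general K hK σ2 hσ C hCpos hCmono D astar hastar hastarK xstar hxstar N hN I hIconv hI
end

section
/- Let K ≥ 2, σ² > 0, 0 < C_1 ≤ … ≤ C_K, R_k^Min > 0 with A_k := 2^{R_k^Min} − 1 and D_k := A_k/(1+A_k), and let a*_k(θ) be defined as in Theorem 2 with x*_k(θ) = Σ_{i>k} a*_i(θ). Let c_K > 0 be the constant slope of a*_K (so a*_K(θ) = a*_K(0) + c_K·θ). Then at every θ > 0 with x*_k(θ) > 0 for all k ≤ K−1, the function N(θ) := log₂(C_1·θ + σ²) + Σ_{k=1}^{K−1}[log₂(C_{k+1}·x*_k(θ) + σ²) − log₂(C_k·x*_k(θ) + σ²)] is differentiable with derivative N′(θ) = (1/ln 2)·C_K·c_K/(σ² + C_K·a*_K(θ)). -/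
/-! At the optimal allocation, the rate constraint of user `k < K` reads
`C_k x_k + σ² = (1 - D_k) (C_k x_{k-1} + σ²)`, so the logarithms in `N` telescope:
near any `θ` where all `C_{k+1} x_k + σ²` are nonzero,
`N(θ) = log₂ (C_K a_K(θ) + σ²) - ∑_k log₂ (1 - D_k)`, and `a_K` is affine with slope `c_K`. -/

open Finset Filter Topology

theorem one_sub_div_one_add_ne_zero (a : ℝ) : 1 - a / (1 + a) ≠ 0 := by
  rcases eq_or_ne (1 + a) 0 with h | h
  · simp [h] -- `a / 0 = 0`
  · simp [one_sub_div h, h]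

theorem HasDerivAt.logb {f : ℝ → ℝ} {f' x : ℝ} (b : ℝ) (hf : HasDerivAt f f' x) (hx : f x ≠ 0) :
    HasDerivAt (fun y => Real.logb b (f y)) (f' / f x / Real.log b) x := by
  simpa only [Real.logb] using (hf.log hx).div_const (Real.log b)

theorem logb_add_sum_Icc_sub_logb {b : ℝ} {f g q : ℕ → ℝ} {n : ℕ}
    (hf : ∀ k < n, f k ≠ 0) (hq : ∀ k < n, q (k + 1) ≠ 0)
    (hg : ∀ k < n, g (k + 1) = q (k + 1) * f k) :
    Real.logb b (f 0) + ∑ k ∈ Icc 1 n, (Real.logb b (f k) - Real.logb b (g k)) =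
      Real.logb b (f n) - ∑ k ∈ Icc 1 n, Real.logb b (q k) := by
  induction n with
  | zero => simp
  | succ n ih =>
    rw [sum_Icc_succ_top (by omega), sum_Icc_succ_top (by omega), ← add_assoc,
      ih (fun k hk => hf k (by omega)) (fun k hk => hq k (by omega)) (fun k hk => hg k (by omega)),
      hg n (by omega), Real.logb_mul (hq n (by omega)) (hf n (by omega))]
    ring

-- Theorem 2: users `1, …, K - 1` get exactly their minimum rate, user `K` the remaining power.
structure IsOptimalAllocation (K : ℕ) (σ2 : ℝ) (C D : ℕ → ℝ) (astar xstar : ℝ → ℕ → ℝ) :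
    Prop where
  astar_eq : ∀ θ : ℝ, ∀ k ∈ Icc 1 (K - 1),
    astar θ k = D k * (θ - ∑ i ∈ Ico 1 k, astar θ i) + D k * σ2 / C k
  astar_last : ∀ θ : ℝ, astar θ K = θ - ∑ i ∈ Ico 1 K, astar θ i
  xstar_eq : ∀ θ k, xstar θ k = ∑ i ∈ Ioc k K, astar θ i

namespace IsOptimalAllocation

variable {K : ℕ} {σ2 : ℝ} {C D : ℕ → ℝ} {astar xstar : ℝ → ℕ → ℝ} {θ : ℝ}

theorem xstar_eq_astar_succ_add (h : IsOptimalAllocation K σ2 C D astar xstar) {k : ℕ}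
    (hk : k < K) : xstar θ k = astar θ (k + 1) + xstar θ (k + 1) := by
  rw [h.xstar_eq, h.xstar_eq, ← sum_Ioc_consecutive _ (Nat.le_succ k) hk, Nat.Ioc_succ_singleton,
    sum_singleton]

theorem xstar_zero (h : IsOptimalAllocation K σ2 C D astar xstar) (hK : 1 ≤ K) :
    xstar θ 0 = θ := by
  obtain ⟨n, rfl⟩ := Nat.exists_eq_add_of_le' hK
  rw [h.xstar_eq, sum_Ioc_succ_top n.zero_le, h.astar_last, ← Ico_add_one_add_one_eq_Ioc,
    zero_add]
  ring

theorem xstar_pred (h : IsOptimalAllocation K σ2 C D astar xstar) (hK : 1 ≤ K) :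
    xstar θ (K - 1) = astar θ K := by
  rw [h.xstar_eq_astar_succ_add (by omega), Nat.sub_add_cancel hK, h.xstar_eq, Ioc_self,
    sum_empty, add_zero]

theorem sub_sum_Ico_astar (h : IsOptimalAllocation K σ2 C D astar xstar) :
    ∀ k < K, θ - ∑ i ∈ Ico 1 (k + 1), astar θ i = xstar θ k
  | 0, hk => by simp [h.xstar_zero hk]
  | k + 1, hk => by
    rw [sum_Ico_succ_top (by omega), ← sub_sub, sub_sum_Ico_astar h k (by omega),
      h.xstar_eq_astar_succ_add (by omega)]
    ring

theorem xstar_succ (h : IsOptimalAllocation K σ2 C D astar xstar) {k : ℕ} (hk : k + 1 < K) :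
    xstar θ (k + 1) = (1 - D (k + 1)) * xstar θ k - D (k + 1) * σ2 / C (k + 1) := by
  have ha := h.astar_eq θ (k + 1) (by simp only [mem_Icc]; omega)
  rw [sub_sum_Ico_astar h k (by omega)] at ha
  have hx := h.xstar_eq_astar_succ_add (θ := θ) (by omega : k < K)
  linear_combination -hx - ha

theorem continuous_xstar (h : IsOptimalAllocation K σ2 C D astar xstar) :
    ∀ k < K, Continuous fun θ => xstar θ k
  | 0, hk => by simpa only [h.xstar_zero hk] using continuous_id'
  | k + 1, hk => by
    simp only [h.xstar_succ hk]
    exact ((continuous_xstar h k (by omega)).const_mul _).sub continuous_const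

theorem mul_xstar_succ_add (h : IsOptimalAllocation K σ2 C D astar xstar) {k : ℕ}
    (hk : k + 1 < K) (hC : C (k + 1) ≠ 0) :
    C (k + 1) * xstar θ (k + 1) + σ2 = (1 - D (k + 1)) * (C (k + 1) * xstar θ k + σ2) := by
  rw [h.xstar_succ hk]
  field_simp
  ring

theorem logb_sum_rate_eq (h : IsOptimalAllocation K σ2 C D astar xstar) (b : ℝ) (hK : 1 ≤ K)
    (hC : ∀ k < K - 1, C (k + 1) ≠ 0) (hD : ∀ k < K - 1, 1 - D (k + 1) ≠ 0)
    (hx : ∀ k < K - 1, C (k + 1) * xstar θ k + σ2 ≠ 0) :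
    Real.logb b (C 1 * θ + σ2) + ∑ k ∈ Icc 1 (K - 1),
        (Real.logb b (C (k + 1) * xstar θ k + σ2) - Real.logb b (C k * xstar θ k + σ2)) =
      Real.logb b (C K * astar θ K + σ2) - ∑ k ∈ Icc 1 (K - 1), Real.logb b (1 - D k) := by
  have htel := logb_add_sum_Icc_sub_logb (b := b) (f := fun k => C (k + 1) * xstar θ k + σ2)
    (g := fun k => C k * xstar θ k + σ2) (q := fun k => 1 - D k) hx hD
    (fun k hk => h.mul_xstar_succ_add (by omega) (hC k hk))
  simpa only [zero_add, h.xstar_zero hK, Nat.sub_add_cancel hK, h.xstar_pred hK] using htel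

end IsOptimalAllocation

theorem stmt_17_general (K : ℕ) (hK : 2 ≤ K) (σ2 : ℝ) (hσ : 0 < σ2)
    (C : ℕ → ℝ)
    (hCpos : ∀ k ∈ Finset.Icc 1 K, 0 < C k)
    (A : ℕ → ℝ)
    (D : ℕ → ℝ) (hD : ∀ k, D k = A k / (1 + A k))
    (astar : ℝ → ℕ → ℝ)
    (hastar : ∀ θ : ℝ, ∀ k ∈ Finset.Icc 1 (K - 1),
      astar θ k = D k * (θ - ∑ i ∈ Finset.Ico 1 k, astar θ i) + D k * σ2 / C k)
    (hastarK : ∀ θ : ℝ, astar θ K = θ - ∑ i ∈ Finset.Ico 1 K, astar θ i)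
    (xstar : ℝ → ℕ → ℝ)
    (hxstar : ∀ θ k, xstar θ k = ∑ i ∈ Finset.Ioc k K, astar θ i)
    (cK : ℝ)
    (hslope : ∀ θ : ℝ, astar θ K = astar 0 K + cK * θ)
    (N : ℝ → ℝ)
    (hN : ∀ θ : ℝ, N θ = Real.logb 2 (C 1 * θ + σ2) +
      ∑ k ∈ Finset.Icc 1 (K - 1),
        (Real.logb 2 (C (k + 1) * xstar θ k + σ2) -
          Real.logb 2 (C k * xstar θ k + σ2))) :
    ∀ θ : ℝ, 0 < θ → (∀ k ∈ Finset.Icc 1 (K - 1), 0 < xstar θ k) →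
      HasDerivAt N (1 / Real.log 2 * (C K * cK / (σ2 + C K * astar θ K))) θ := by
  intro θ hθ hxpos
  have h : IsOptimalAllocation K σ2 C D astar xstar := ⟨hastar, hastarK, hxstar⟩
  have hC : ∀ k < K, 0 < C (k + 1) := fun k hk => hCpos _ (by simp only [mem_Icc]; omega)
  have hrate : ∀ k < K, 0 < C (k + 1) * xstar θ k + σ2 := fun k hk => by
    have hx : 0 < xstar θ k := by
      rcases k with _ | k
      · rwa [h.xstar_zero (by omega)]
      · exact hxpos _ (by simp only [mem_Icc]; omega)
    exact add_pos (mul_pos (hC k hk) hx) hσ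
  have hnear : ∀ᶠ θ' in 𝓝 θ, ∀ k < K - 1, C (k + 1) * xstar θ' k + σ2 ≠ 0 :=
    (eventually_all_finite (Set.finite_Iio _)).2 fun k hk =>
      have hk : k < K := by rw [Set.mem_Iio] at hk; omega
      (((h.continuous_xstar k hk).const_mul _).add continuous_const).continuousAt.eventually_ne
        (hrate k hk).ne'
  have hN_eq : N =ᶠ[𝓝 θ] fun θ' =>
      Real.logb 2 (C K * astar θ' K + σ2) - ∑ k ∈ Icc 1 (K - 1), Real.logb 2 (1 - D k) := by
    filter_upwards [hnear] with θ' hθ'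
    rw [hN, h.logb_sum_rate_eq 2 (by omega) (fun k hk => (hC k (by omega)).ne')
      (fun k _ => hD (k + 1) ▸ one_sub_div_one_add_ne_zero _) hθ']
  have ha : HasDerivAt (fun θ' => astar θ' K) cK θ := by
    simpa using (((hasDerivAt_id' θ).const_mul cK).const_add (astar 0 K)).congr_of_eventuallyEq
      (.of_forall hslope)
  have hpos : 0 < C K * astar θ K + σ2 := by
    have hK1 : 1 ≤ K := by omega
    simpa only [Nat.sub_add_cancel hK1, h.xstar_pred hK1] using hrate (K - 1) (by omega)
  refine ((((ha.const_mul (C K)).add_const σ2).logb 2 hpos.ne').sub_const _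
    |>.congr_of_eventuallyEq hN_eq).congr_deriv ?_
  ring

/-- The derivative computation underlying equation (26) of the paper: at the optimal
allocation `a*(θ)` of Theorem 2, the optimized sum rate
`N(θ) = log₂(C_1 θ + σ²) + ∑_{k=1}^{K−1} [log₂(C_{k+1} x*_k(θ) + σ²) − log₂(C_k x*_k(θ) + σ²)]`
is differentiable at every `θ > 0` with all `x*_k(θ) > 0`, with derivative
`N′(θ) = (1/ln 2) · C_K c_K / (σ² + C_K a*_K(θ))`, where `c_K > 0` is the constant slope of
the affine map `θ ↦ a*_K(θ)`. -/
theorem stmt_17 (K : ℕ) (hK : 2 ≤ K) (σ2 : ℝ) (hσ : 0 < σ2)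
    (C : ℕ → ℝ)
    (hCpos : ∀ k ∈ Finset.Icc 1 K, 0 < C k)
    (hCmono : ∀ k ∈ Finset.Icc 1 (K - 1), C k ≤ C (k + 1))
    (RMin : ℕ → ℝ) (hR : ∀ k ∈ Finset.Icc 1 K, 0 < RMin k)
    (A : ℕ → ℝ) (hA : ∀ k, A k = (2 : ℝ) ^ RMin k - 1)
    (D : ℕ → ℝ) (hD : ∀ k, D k = A k / (1 + A k))
    (astar : ℝ → ℕ → ℝ)
    (hastar : ∀ θ : ℝ, ∀ k ∈ Finset.Icc 1 (K - 1),
      astar θ k = D k * (θ - ∑ i ∈ Finset.Ico 1 k, astar θ i) + D k * σ2 / C k)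
    (hastarK : ∀ θ : ℝ, astar θ K = θ - ∑ i ∈ Finset.Ico 1 K, astar θ i)
    (xstar : ℝ → ℕ → ℝ)
    (hxstar : ∀ θ k, xstar θ k = ∑ i ∈ Finset.Ioc k K, astar θ i)
    (cK : ℝ) (hcK : 0 < cK)
    (hslope : ∀ θ : ℝ, astar θ K = astar 0 K + cK * θ)
    (N : ℝ → ℝ)
    (hN : ∀ θ : ℝ, N θ = Real.logb 2 (C 1 * θ + σ2) +
      ∑ k ∈ Finset.Icc 1 (K - 1),
        (Real.logb 2 (C (k + 1) * xstar θ k + σ2) -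
          Real.logb 2 (C k * xstar θ k + σ2))) :
    ∀ θ : ℝ, 0 < θ → (∀ k ∈ Finset.Icc 1 (K - 1), 0 < xstar θ k) →
      HasDerivAt N (1 / Real.log 2 * (C K * cK / (σ2 + C K * astar θ K))) θ :=
  stmt_17_general K hK σ2 hσ C hCpos A D hD astar hastar hastarK xstar hxstar cK hslope N hN
end
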